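/- arXiv:patt-sol/9811006 — 7 statements merged into one kernel-verified Lean document; each statement's English description precedes it below -/
import Mathlib

section
/- Let σ be continuously differentiable, let u be a classical solution of the microkinetically regularized wave equation on [0,T]×[0,1], set ε = ∂ₓu and η = ∂ₓ∂ₜu, and let k : [0,T]×[0,1] → ℝ be such that for each t ∈ [0,T] the function k(t,·) solves the elliptic coupling problem with right-hand side f(x) = σ(ε(t,x)). Then the Dirac Young measure Ψ(t,x) = δ_{(ε(t,x),η(t,x))} is a solution of the extended (Young-measure) system; concretely, for every g ∈ C¹(ℝ²,ℝ) and every (t,x) ∈ [0,T]×[0,1], ∂ₜ[g(ε(t,x), η(t,x))] = ∂₁g(ε(t,x),η(t,x))·η(t,x) − ∂₂g(ε(t,x),η(t,x))·(σ(ε(t,x)) − k(t,x))/β. -/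
open MeasureTheory

/-- Partial derivative in the first (time) variable. -/
noncomputable def pt (u : ℝ → ℝ → ℝ) : ℝ → ℝ → ℝ := fun t x => deriv (fun s => u s x) t

/-- Partial derivative in the second (space) variable. -/
noncomputable def px (u : ℝ → ℝ → ℝ) : ℝ → ℝ → ℝ := fun t x => deriv (fun y => u t y) x

/-- `u` is a classical solution of the microkinetically regularized wave equation
`ρ ∂ₜ²u = ∂ₓ(σ(∂ₓu) + β ∂ₓ∂ₜ²u)` on `[0,T] × [0,1]`, with boundary conditions
`u(t,0) = 0` and `σ(∂ₓu(t,1)) + β ∂ₓ∂ₜ²u(t,1) = 0`; all partial derivatives up to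
fourth order exist and are continuous. -/
def IsClassicalSolutionOn (β ρ : ℝ) (σ : ℝ → ℝ) (T : ℝ) (u : ℝ → ℝ → ℝ) : Prop :=
  ContDiff ℝ 4 (Function.uncurry u) ∧
  (∀ t ∈ Set.Icc 0 T, ∀ x ∈ Set.Ioo (0:ℝ) 1,
    ρ * pt (pt u) t x = deriv (fun y => σ (px u t y) + β * px (pt (pt u)) t y) x) ∧
  (∀ t ∈ Set.Icc 0 T, u t 0 = 0) ∧
  (∀ t ∈ Set.Icc 0 T, σ (px u t 1) + β * px (pt (pt u)) t 1 = 0)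

/-- `k ∈ C²([0,1])` solves the elliptic coupling problem
`ρ k − β k'' = ρ f` on `(0,1)`, `k'(0) = 0`, `k(1) = 0`. -/
def SolvesCoupling (β ρ : ℝ) (f k : ℝ → ℝ) : Prop :=
  ContDiff ℝ 2 k ∧
  (∀ x ∈ Set.Ioo (0:ℝ) 1, ρ * k x - β * deriv (deriv k) x = ρ * f x) ∧
  deriv k 0 = 0 ∧ k 1 = 0

open Set

noncomputable def Dv (F : ℝ × ℝ → ℝ) (v : ℝ × ℝ) : ℝ × ℝ → ℝ := fun p => fderiv ℝ F p v

lemma contDiff_Dv {m n : WithTop ℕ∞} {F : ℝ × ℝ → ℝ} (hF : ContDiff ℝ n F)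
    (hmn : m + 1 ≤ n) (v : ℝ × ℝ) : ContDiff ℝ m (Dv F v) :=
  (ContinuousLinearMap.apply ℝ ℝ v).contDiff.comp (hF.fderiv_right hmn)

lemma slice1 {F : ℝ × ℝ → ℝ} {p : ℝ × ℝ} (hF : DifferentiableAt ℝ F p) :
    HasDerivAt (fun s => F (s, p.2)) (Dv F (1, 0) p) p.1 := by
  have h : HasDerivAt (fun s : ℝ => (s, p.2)) ((1 : ℝ), (0 : ℝ)) p.1 :=
    (hasDerivAt_id p.1).prodMk (hasDerivAt_const p.1 p.2)
  exact hF.hasFDerivAt.comp_hasDerivAt p.1 h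

lemma slice2 {F : ℝ × ℝ → ℝ} {p : ℝ × ℝ} (hF : DifferentiableAt ℝ F p) :
    HasDerivAt (fun y => F (p.1, y)) (Dv F (0, 1) p) p.2 := by
  have h : HasDerivAt (fun y : ℝ => (p.1, y)) ((0 : ℝ), (1 : ℝ)) p.2 :=
    (hasDerivAt_const p.2 p.1).prodMk (hasDerivAt_id p.2)
  exact hF.hasFDerivAt.comp_hasDerivAt p.2 h

lemma swap2 {F : ℝ × ℝ → ℝ} (hF : ContDiff ℝ 2 F) (p v w : ℝ × ℝ) :
    fderiv ℝ (Dv F v) p w = fderiv ℝ (Dv F w) p v := by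
  have hd : Differentiable ℝ F := hF.differentiable two_ne_zero
  have hf' : Differentiable ℝ (fderiv ℝ F) :=
    (hF.fderiv_right (m := 1) (by norm_num)).differentiable one_ne_zero
  have hsymm := second_derivative_symmetric (f := F) (f' := fderiv ℝ F)
    (f'' := fderiv ℝ (fderiv ℝ F) p) (fun y => (hd y).hasFDerivAt) ((hf' p).hasFDerivAt)
  have e : ∀ z : ℝ × ℝ, fderiv ℝ (Dv F z) p = (fderiv ℝ (fderiv ℝ F) p).flip z := by
    intro z
    have := fderiv_clm_apply (c := fderiv ℝ F) (u := fun _ => z) (hf' p)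
      (differentiableAt_const z)
    simp at this
    exact this
  rw [e v, e w]
  simp only [ContinuousLinearMap.flip_apply]
  exact hsymm w v
open Set Real Filter

lemma bvp_uniq (β ρ : ℝ) (hβ : 0 < β) (hρ : 0 ≤ ρ) (d d' : ℝ → ℝ)
    (hd : ∀ y, HasDerivAt d (d' y) y)
    (hcd' : Continuous d')
    (hd'' : ∀ y ∈ Set.Ioo (0:ℝ) 1, HasDerivAt d' (ρ / β * d y) y)
    (h0 : d' 0 = 0) (h1 : d 1 = 0) : ∀ y ∈ Set.Icc (0:ℝ) 1, d y = 0 := by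
  have hcd : Continuous d :=
    continuous_iff_continuousAt.mpr fun y => (hd y).continuousAt
  -- the energy E is constant
  set E : ℝ → ℝ := fun y => β * d' y ^ 2 - ρ * d y ^ 2 with hE
  have hEcont : Continuous E := by
    apply Continuous.sub <;> exact continuous_const.mul (by fun_prop)
  have hE' : ∀ y ∈ Set.Ioo (0:ℝ) 1, HasDerivAt E 0 y := by
    intro y hy
    have h := ((((hd'' y hy).pow 2).const_mul β).sub (((hd y).pow 2).const_mul ρ))
    have e : β * (↑(2:ℕ) * d' y ^ (2 - 1) * (ρ / β * d y)) - ρ * (↑(2:ℕ) * d y ^ (2 - 1) * d' y) = 0 := by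
      field_simp
      ring
    rw [e] at h
    exact h
  have hconst : ∀ a ∈ Set.Ioo (0:ℝ) 1, E 1 = E a := by
    intro a ha
    refine constant_of_has_deriv_right_zero (f := E) (a := a) (b := 1)
      hEcont.continuousOn (fun y hy => ?_) 1 (right_mem_Icc.mpr ha.2.le)
    exact (hE' y ⟨lt_of_lt_of_le ha.1 hy.1, hy.2⟩).hasDerivWithinAt
  have hE01 : E 1 = E 0 := by
    have hS : IsClosed {y : ℝ | E 1 = E y} := isClosed_eq continuous_const hEcont
    have hsub : Set.Icc (0:ℝ) 1 ⊆ {y : ℝ | E 1 = E y} := by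
      rw [← closure_Ioo (zero_ne_one)]
      exact hS.closure_subset_iff.mpr hconst
    exact hsub ⟨le_refl 0, zero_le_one⟩
  have hd'1 : d' 1 = 0 := by
    have he : β * d' 1 ^ 2 - ρ * d 1 ^ 2 = β * d' 0 ^ 2 - ρ * d 0 ^ 2 := hE01
    rw [h0, h1] at he
    have h2 : d' 1 ^ 2 = 0 := by nlinarith [sq_nonneg (d' 1), sq_nonneg (d 0)]
    exact pow_eq_zero_iff two_ne_zero |>.mp h2
  -- Gronwall argument on G, backwards from 1
  set G : ℝ → ℝ := fun y => d y ^ 2 + d' y ^ 2 with hGdef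
  set G' : ℝ → ℝ := fun y => 2 * d y ^ 1 * d' y + 2 * d' y ^ 1 * (ρ / β * d y) with hG'def
  have hGcont : Continuous G := by fun_prop
  have hGnonneg : ∀ y, 0 ≤ G y := fun y => by positivity
  have hG1 : G 1 = 0 := by simp [hGdef, h1, hd'1]
  set K : ℝ := 1 + ρ / β with hKdef
  have hK0 : 0 < K := by
    rw [hKdef]; have := div_nonneg hρ hβ.le; linarith
  have hG' : ∀ y ∈ Set.Ioo (0:ℝ) 1, HasDerivAt G (G' y) y := by
    intro y hy
    exact ((hd y).pow 2).add ((hd'' y hy).pow 2)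
  have hGbound : ∀ y ∈ Set.Ioo (0:ℝ) 1, |G' y| ≤ K * G y := by
    intro y hy
    have hc : (0:ℝ) ≤ ρ / β := div_nonneg hρ hβ.le
    rw [abs_le]
    simp only [hG'def, hGdef, hKdef]
    constructor <;>
      nlinarith [mul_nonneg hc (sq_nonneg (d y - d' y)), sq_nonneg (d y - d' y),
        mul_nonneg hc (sq_nonneg (d y + d' y)), sq_nonneg (d y + d' y)]
  have main : ∀ x ∈ Set.Icc (0:ℝ) 1, G x = 0 := by
    intro x hx
    rcases eq_or_lt_of_le hx.2 with hx1 | hx1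
    · rw [hx1]; exact hG1
    have claim : ∀ a ∈ Set.Ioo (0:ℝ) (1 - x), G x ≤ G (1 - a) * Real.exp K := by
      intro a ha
      have hmem : ∀ s ∈ Set.Ico a (1 - x), (1 - s) ∈ Set.Ioo (0:ℝ) 1 := by
        intro s hs
        exact ⟨by linarith [hs.2, hx.1], by linarith [ha.1, hs.1]⟩
      have hgron := norm_le_gronwallBound_of_norm_deriv_right_le
        (f := fun s => G (1 - s)) (f' := fun s => G' (1 - s) * (0 - 1))
        (δ := G (1 - a)) (K := K) (ε := 0) (a := a) (b := 1 - x)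
        ((hGcont.comp (show Continuous fun s : ℝ => 1 - s from by fun_prop)).continuousOn)
        (fun s hs => by
          have h := (hG' (1 - s) (hmem s hs)).comp s
            ((hasDerivAt_const s (1:ℝ)).sub (hasDerivAt_id s))
          exact h.hasDerivWithinAt)
        (by simp [abs_of_nonneg (hGnonneg _)])
        (fun s hs => by
          have hb := hGbound (1 - s) (hmem s hs)
          rw [Real.norm_eq_abs, Real.norm_eq_abs, abs_of_nonneg (hGnonneg _)]
          calc |G' (1 - s) * (0 - 1)| = |G' (1 - s)| := by rw [abs_mul]; norm_num
            _ ≤ K * G (1 - s) + 0 := by linarith)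
        (1 - x) ⟨ha.2.le, le_refl _⟩
      simp only [Real.norm_eq_abs] at hgron
      rw [show (1:ℝ) - (1 - x) = x from by ring, abs_of_nonneg (hGnonneg _)] at hgron
      rw [gronwallBound_of_K_ne_0 hK0.ne'] at hgron
      simp only [zero_div, zero_mul, add_zero] at hgron
      calc G x ≤ G (1 - a) * Real.exp (K * (1 - x - a)) := hgron
        _ ≤ G (1 - a) * Real.exp K := by
            apply mul_le_mul_of_nonneg_left _ (hGnonneg _)
            apply Real.exp_le_exp.mpr
            nlinarith [mul_nonneg hK0.le (show (0:ℝ) ≤ x + a from by linarith [hx.1, ha.1])]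
    have hlim : Filter.Tendsto (fun a => G (1 - a) * Real.exp K)
        (nhdsWithin 0 (Set.Ioi 0)) (nhds 0) := by
      have h1' : Filter.Tendsto (fun a : ℝ => G (1 - a)) (nhds 0) (nhds (G 1)) := by
        have hc : Continuous fun a : ℝ => G (1 - a) := hGcont.comp (by fun_prop)
        simpa using hc.tendsto 0
      rw [hG1] at h1'
      have h2' : Filter.Tendsto (fun a => G (1 - a)) (nhdsWithin 0 (Set.Ioi 0)) (nhds 0) :=
        h1'.mono_left nhdsWithin_le_nhds
      simpa using h2'.mul_const (Real.exp K)
    have hle : G x ≤ 0 := by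
      refine ge_of_tendsto hlim ?_
      filter_upwards [Ioo_mem_nhdsGT_of_mem
        (show (0:ℝ) ∈ Set.Ico (0:ℝ) (1 - x) from ⟨le_refl 0, by linarith [hx1]⟩)] with a ha
      exact claim a ha
    exact le_antisymm hle (hGnonneg x)
  intro y hy
  have hGy := main y hy
  simp only [hGdef] at hGy
  have h2 : d y ^ 2 = 0 := by nlinarith [sq_nonneg (d y), sq_nonneg (d' y)]
  exact pow_eq_zero_iff two_ne_zero |>.mp h2

/-- the Dirac Young measure `Ψ(t,x) = δ_{(ε(t,x),η(t,x))}` built from a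
classical solution (with `ε = ∂ₓu`, `η = ∂ₓ∂ₜu`) solves the extended Young-measure
system: for every `g ∈ C¹(ℝ²,ℝ)` and `(t,x) ∈ [0,T] × [0,1]`,
`∂ₜ[g(ε,η)] = ∂₁g·η − ∂₂g·(σ(ε) − k)/β`. -/
theorem stmt4 (β ρ : ℝ) (hβ : 0 < β) (hρ : 0 ≤ ρ) (T : ℝ) (hT : 0 < T)
    (σ : ℝ → ℝ) (hσ : ContDiff ℝ 1 σ)
    (u : ℝ → ℝ → ℝ) (hu : IsClassicalSolutionOn β ρ σ T u)
    (k : ℝ → ℝ → ℝ)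
    (hk : ∀ t ∈ Set.Icc 0 T, SolvesCoupling β ρ (fun x => σ (px u t x)) (k t)) :
    ∀ g : ℝ × ℝ → ℝ, ContDiff ℝ 1 g →
      ∀ t ∈ Set.Icc 0 T, ∀ x ∈ Set.Icc (0:ℝ) 1,
        HasDerivAt (fun s => g (px u s x, px (pt u) s x))
          (fderiv ℝ g (px u t x, px (pt u) t x) (1, 0) * px (pt u) t x
            - fderiv ℝ g (px u t x, px (pt u) t x) (0, 1)
              * (σ (px u t x) - k t x) / β) t := by
  obtain ⟨hU4, hpde, hbc0, hbc1⟩ := hu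
  set U : ℝ × ℝ → ℝ := Function.uncurry u with hUdef
  set A1 : ℝ × ℝ → ℝ := Dv U (0, 1) with hA1def
  set B1 : ℝ × ℝ → ℝ := Dv U (1, 0) with hB1def
  set A2 : ℝ × ℝ → ℝ := Dv B1 (0, 1) with hA2def
  set B2 : ℝ × ℝ → ℝ := Dv B1 (1, 0) with hB2def
  set Q : ℝ × ℝ → ℝ := Dv B2 (0, 1) with hQdef
  have hA1c : ContDiff ℝ 3 A1 := contDiff_Dv hU4 (by norm_num) _
  have hB1c : ContDiff ℝ 3 B1 := contDiff_Dv hU4 (by norm_num) _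
  have hA2c : ContDiff ℝ 2 A2 := contDiff_Dv hB1c (by norm_num) _
  have hB2c : ContDiff ℝ 2 B2 := contDiff_Dv hB1c (by norm_num) _
  have hQc : ContDiff ℝ 1 Q := contDiff_Dv hB2c (by norm_num) _
  have hUd : Differentiable ℝ U := hU4.differentiable (by norm_num)
  -- pointwise identifications
  have eB1 : ∀ a b : ℝ, pt u a b = B1 (a, b) := fun a b =>
    (slice1 (p := (a, b)) (hUd _)).deriv
  have eA1 : ∀ a b : ℝ, px u a b = A1 (a, b) := fun a b =>
    (slice2 (p := (a, b)) (hUd _)).deriv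
  have eB2 : ∀ a b : ℝ, pt (pt u) a b = B2 (a, b) := by
    intro a b
    have hfn : (fun s => pt u s b) = fun s => B1 (s, b) := funext fun s => eB1 s b
    show deriv (fun s => pt u s b) a = B2 (a, b)
    rw [hfn]
    exact (slice1 (p := (a, b)) (hB1c.differentiable (by norm_num) _)).deriv
  have eA2 : ∀ a b : ℝ, px (pt u) a b = A2 (a, b) := by
    intro a b
    have hfn : (fun y => pt u a y) = fun y => B1 (a, y) := funext fun y => eB1 a y
    show deriv (fun y => pt u a y) b = A2 (a, b)
    rw [hfn]
    exact (slice2 (p := (a, b)) (hB1c.differentiable (by norm_num) _)).deriv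
  have eQ : ∀ a b : ℝ, px (pt (pt u)) a b = Q (a, b) := by
    intro a b
    have hfn : (fun y => pt (pt u) a y) = fun y => B2 (a, y) := funext fun y => eB2 a y
    show deriv (fun y => pt (pt u) a y) b = Q (a, b)
    rw [hfn]
    exact (slice2 (p := (a, b)) (hB2c.differentiable (by norm_num) _)).deriv
  -- mixed second derivatives
  have hEta : ∀ a b : ℝ, HasDerivAt (fun s => A1 (s, b)) (A2 (a, b)) a := by
    intro a b
    have h := slice1 (F := A1) (p := (a, b)) (hA1c.differentiable (by norm_num) _)
    have hsw : Dv A1 (1, 0) (a, b) = A2 (a, b) :=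
      swap2 (hU4.of_le (by norm_num)) (a, b) (0, 1) (1, 0)
    rwa [hsw] at h
  have hQd : ∀ a b : ℝ, HasDerivAt (fun s => A2 (s, b)) (Q (a, b)) a := by
    intro a b
    have h := slice1 (F := A2) (p := (a, b)) (hA2c.differentiable (by norm_num) _)
    have hsw : Dv A2 (1, 0) (a, b) = Q (a, b) :=
      swap2 (hB1c.of_le (by norm_num)) (a, b) (0, 1) (1, 0)
    rwa [hsw] at h
  -- boundary values at x = 0
  have hB1zero : ∀ s ∈ Set.Icc 0 T, B1 (s, 0) = 0 := by
    have hIoo : ∀ s ∈ Set.Ioo 0 T, B1 (s, 0) = 0 := by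
      intro s hs
      rw [← eB1]
      show deriv (fun s' => u s' 0) s = 0
      have hev : (fun s' => u s' 0) =ᶠ[nhds s] fun _ => (0:ℝ) := by
        filter_upwards [isOpen_Ioo.mem_nhds hs] with s' hs'
        exact hbc0 s' (Set.Ioo_subset_Icc_self hs')
      rw [hev.deriv_eq, deriv_const]
    have hcl : IsClosed {s : ℝ | B1 (s, 0) = 0} :=
      isClosed_eq (hB1c.continuous.comp (by fun_prop)) continuous_const
    intro s hs
    have : Set.Icc 0 T ⊆ {s : ℝ | B1 (s, 0) = 0} := by
      rw [← closure_Ioo hT.ne]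
      exact hcl.closure_subset_iff.mpr hIoo
    exact this hs
  have hB2zero : ∀ s ∈ Set.Icc 0 T, B2 (s, 0) = 0 := by
    have hIoo : ∀ s ∈ Set.Ioo 0 T, B2 (s, 0) = 0 := by
      intro s hs
      have h := slice1 (F := B1) (p := (s, 0)) (hB1c.differentiable (by norm_num) _)
      have hev : (fun s' => B1 (s', 0)) =ᶠ[nhds s] fun _ => (0:ℝ) := by
        filter_upwards [isOpen_Ioo.mem_nhds hs] with s' hs'
        exact hB1zero s' (Set.Ioo_subset_Icc_self hs')
      have : deriv (fun s' => B1 (s', 0)) s = B2 (s, 0) := h.deriv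
      rw [← this, hev.deriv_eq, deriv_const]
    have hcl : IsClosed {s : ℝ | B2 (s, 0) = 0} :=
      isClosed_eq (hB2c.continuous.comp (by fun_prop)) continuous_const
    intro s hs
    have : Set.Icc 0 T ⊆ {s : ℝ | B2 (s, 0) = 0} := by
      rw [← closure_Ioo hT.ne]
      exact hcl.closure_subset_iff.mpr hIoo
    exact this hs
  intro g hg t ht x hx
  -- the elliptic coupling identification at time t
  obtain ⟨hk2, hkeq, hk0, hk1⟩ := hk t ht
  have key : ∀ y ∈ Set.Icc (0:ℝ) 1, Q (t, y) = (k t y - σ (A1 (t, y))) / β := by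
    set W : ℝ → ℝ := fun y => σ (A1 (t, y)) + β * Q (t, y) with hWdef
    set W1 : ℝ → ℝ := fun y =>
      deriv σ (A1 (t, y)) * Dv A1 (0, 1) (t, y) + β * Dv Q (0, 1) (t, y) with hW1def
    have hσd : Differentiable ℝ σ := hσ.differentiable one_ne_zero
    have hW : ∀ y, HasDerivAt W (W1 y) y := by
      intro y
      have h1 : HasDerivAt (fun y' => A1 (t, y')) (Dv A1 (0, 1) (t, y)) y :=
        slice2 (p := (t, y)) (hA1c.differentiable (by norm_num) _)
      have h2 : HasDerivAt (fun y' => Q (t, y')) (Dv Q (0, 1) (t, y)) y :=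
        slice2 (p := (t, y)) (hQc.differentiable one_ne_zero _)
      have hσ' : HasDerivAt σ (deriv σ (A1 (t, y))) (A1 (t, y)) := (hσd _).hasDerivAt
      exact (hσ'.comp y h1).add (h2.const_mul β)
    have hW1cont : Continuous W1 := by
      have c1 : Continuous fun y : ℝ => A1 (t, y) := hA1c.continuous.comp (by fun_prop)
      have c2 : Continuous (deriv σ) := hσ.continuous_deriv le_rfl
      have c3 : Continuous (Dv A1 (0, 1)) := (contDiff_Dv (m := 0) hA1c (by norm_num) _).continuous
      have c4 : Continuous (Dv Q (0, 1)) :=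
        (contDiff_Dv (m := 0) hQc (by norm_num) _).continuous
      rw [hW1def]
      exact ((c2.comp c1).mul (c3.comp (by fun_prop))).add
        (continuous_const.mul (c4.comp (by fun_prop)))
    have hWpde : ∀ y ∈ Set.Ioo (0:ℝ) 1, W1 y = ρ * B2 (t, y) := by
      intro y hy
      have h := hpde t ht y hy
      rw [eB2] at h
      have hfn2 : (fun y' => σ (px u t y') + β * px (pt (pt u)) t y') = W :=
        funext fun y' => by rw [eA1, eQ]
      rw [hfn2, (hW y).deriv] at h
      exact h.symm
    have hW1at : ∀ y ∈ Set.Icc (0:ℝ) 1, W1 y = ρ * B2 (t, y) := by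
      have hcl : IsClosed {y : ℝ | W1 y = ρ * B2 (t, y)} :=
        isClosed_eq hW1cont (continuous_const.mul (hB2c.continuous.comp (by fun_prop)))
      intro y hy
      have hsub : Set.Icc (0:ℝ) 1 ⊆ {y : ℝ | W1 y = ρ * B2 (t, y)} := by
        rw [← closure_Ioo (zero_ne_one)]
        exact hcl.closure_subset_iff.mpr hWpde
      exact hsub hy
    have hW1zero : W1 0 = 0 := by
      rw [hW1at 0 ⟨le_refl 0, zero_le_one⟩, hB2zero t ht, mul_zero]
    have hWone : W 1 = 0 := by
      have hb := hbc1 t ht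
      rw [eA1, eQ] at hb
      exact hb
    have hW1' : ∀ y ∈ Set.Ioo (0:ℝ) 1, HasDerivAt W1 (ρ * Q (t, y)) y := by
      intro y hy
      have h2 : HasDerivAt (fun y' => ρ * B2 (t, y')) (ρ * Dv B2 (0, 1) (t, y)) y :=
        (slice2 (p := (t, y)) (hB2c.differentiable (by norm_num) _)).const_mul ρ
      have hev : W1 =ᶠ[nhds y] fun y' => ρ * B2 (t, y') := by
        filter_upwards [isOpen_Ioo.mem_nhds hy] with y' hy'
        exact hWpde y' hy'
      exact h2.congr_of_eventuallyEq hev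
    -- k side
    have hk2' : ContDiff ℝ (1 + 1) (k t) := by norm_num at hk2 ⊢; exact hk2
    obtain ⟨hkd, -, hkd1⟩ := contDiff_succ_iff_deriv.mp hk2'
    have hK1 : ∀ y, HasDerivAt (k t) (deriv (k t) y) y := fun y => (hkd y).hasDerivAt
    have hK2 : ∀ y, HasDerivAt (deriv (k t)) (deriv (deriv (k t)) y) y := fun y =>
      ((hkd1.differentiable one_ne_zero) y).hasDerivAt
    have hcK' : Continuous (deriv (k t)) := hkd1.continuous
    -- the difference
    set d : ℝ → ℝ := fun y => W y - k t y with hddef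
    set d' : ℝ → ℝ := fun y => W1 y - deriv (k t) y with hd'def
    have hd : ∀ y, HasDerivAt d (d' y) y := fun y => (hW y).sub (hK1 y)
    have hcd' : Continuous d' := hW1cont.sub hcK'
    have hd'' : ∀ y ∈ Set.Ioo (0:ℝ) 1, HasDerivAt d' (ρ / β * d y) y := by
      intro y hy
      have h := (hW1' y hy).sub (hK2 y)
      have hval : ρ * Q (t, y) - deriv (deriv (k t)) y = ρ / β * d y := by
        have hk' : ρ * k t y - β * deriv (deriv (k t)) y = ρ * σ (A1 (t, y)) := by
          simpa only [eA1] using hkeq y hy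
        have hWy : W y = σ (A1 (t, y)) + β * Q (t, y) := rfl
        have hdy : d y = W y - k t y := rfl
        field_simp
        nlinarith [hk', hWy, hdy]
      rwa [hval] at h
    have hd0 : d' 0 = 0 := by
      show W1 0 - deriv (k t) 0 = 0
      rw [hW1zero, hk0, sub_zero]
    have hd1 : d 1 = 0 := by
      show W 1 - k t 1 = 0
      rw [hWone, hk1, sub_zero]
    have hzero := bvp_uniq β ρ hβ hρ d d' hd hcd' hd'' hd0 hd1
    intro y hy
    have hW_eq : W y = k t y := by
      have := hzero y hy
      have hdy : d y = W y - k t y := rfl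
      linarith [hdy ▸ this]
    have hWy : σ (A1 (t, y)) + β * Q (t, y) = k t y := hW_eq
    field_simp
    linarith [hWy]
  -- assemble the chain rule
  have h1 : HasDerivAt (fun s => (A1 (s, x), A2 (s, x))) ((A2 (t, x), Q (t, x))) t :=
    (hEta t x).prodMk (hQd t x)
  have hgf : HasFDerivAt g (fderiv ℝ g (A1 (t, x), A2 (t, x))) (A1 (t, x), A2 (t, x)) :=
    ((hg.differentiable one_ne_zero) _).hasFDerivAt
  have h2 := hgf.comp_hasDerivAt t h1
  have hfn : (fun s => g (px u s x, px (pt u) s x)) = fun s => g (A1 (s, x), A2 (s, x)) :=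
    funext fun s => by rw [eA1, eA2]
  rw [hfn, eA1, eA2]
  have hvec : ((A2 (t, x) : ℝ), Q (t, x))
      = A2 (t, x) • ((1:ℝ), (0:ℝ)) + Q (t, x) • ((0:ℝ), (1:ℝ)) := by
    simp [Prod.ext_iff]
  rw [hvec, map_add] at h2
  simp only [_root_.map_smul, smul_eq_mul] at h2
  have hQval := key x hx
  refine h2.congr_deriv ?_
  rw [hQval]
  field_simp
  ring
end

section
/- Let β > 0, W(ε) = (1/4)(ε² − 1)², and define H : ℝ² → ℝ by H(y) = (β/2)y₂² + W(y₁). Define the partition P₁ = {y ∈ ℝ² : H(y) < 1/4 and y₁ < 0}, P₂ = {y ∈ ℝ² : H(y) < 1/4 and y₁ > 0}, P₀ = ℝ² ∖ (P₁ ∪ P₂). Suppose Ψ* : [0,1] × ℝ² → ℝ is such that for every x ∈ [0,1] the function Ψ*(x,·) is C¹ and satisfies the stationarity equation ∂_{y₁}Ψ*(x,y)·β y₂ − ∂_{y₂}Ψ*(x,y)·W'(y₁) = 0 for all y ∈ ℝ². Then there exist functions α₀, α₁, α₂ : [0,1] × ℝ → ℝ such that Ψ*(x,y) = αᵢ(x,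 H(y)) whenever y ∈ Pᵢ, for i = 0, 1, 2. -/
open Set


lemma arc_lemma (β : ℝ) (hβ : 0 < β) (f : ℝ × ℝ → ℝ) (hf : ContDiff ℝ 1 f)
    (hstat : ∀ y : ℝ × ℝ, fderiv ℝ f y (1, 0) * (β * y.2)
      - fderiv ℝ f y (0, 1) * (y.1 ^ 3 - y.1) = 0)
    (s h a b : ℝ) (hs : s = 1 ∨ s = -1) (hab : a ≤ b)
    (hin : ∀ t ∈ Set.Ioo a b, (1/4 : ℝ) * (t^2 - 1)^2 < h) :
    f (b, s * Real.sqrt (2 * (h - (1/4) * (b^2 - 1)^2) / β))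
      = f (a, s * Real.sqrt (2 * (h - (1/4) * (a^2 - 1)^2) / β)) := by
  rcases eq_or_lt_of_le hab with rfl | hlt
  · rfl
  set q : ℝ → ℝ := fun t => 2 * (h - (1/4) * (t^2 - 1)^2) / β with hq
  set g : ℝ → ℝ := fun t => f (t, s * Real.sqrt (q t)) with hg
  have hqc : Continuous q := by fun_prop
  have gcont : ContinuousOn g (Icc a b) := by
    apply Continuous.continuousOn
    exact hf.continuous.comp (continuous_id.prodMk (continuous_const.mul (hqc.sqrt)))
  have gderiv : ∀ t ∈ Ioo a b, HasDerivAt g 0 t := by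
    intro t ht
    have hWt := hin t ht
    have hqpos : 0 < q t := by
      have h2 : 0 < 2 * (h - (1/4) * (t^2 - 1)^2) := by nlinarith
      exact div_pos h2 hβ
    have hupos : 0 < Real.sqrt (q t) := Real.sqrt_pos.mpr hqpos
    set u := Real.sqrt (q t) with hu
    have h1 : HasDerivAt (fun t : ℝ => t^2 - 1) (2 * t) t := by
      simpa using (hasDerivAt_pow 2 t).sub_const 1
    have h2 : HasDerivAt (fun t : ℝ => (t^2 - 1)^2) (2 * (t^2-1)^1 * (2*t)) t := h1.pow 2
    have h3 : HasDerivAt (fun t : ℝ => h - (1/4) * (t^2-1)^2)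
        (-((1/4) * (2 * (t^2-1)^1 * (2*t)))) t := (h2.const_mul (1/4)).const_sub h
    have hq' : HasDerivAt q (2 * (-((1/4) * (2 * (t^2-1)^1 * (2*t)))) / β) t :=
      (h3.const_mul 2).div_const β
    have hsq : HasDerivAt (fun t => Real.sqrt (q t))
        (1 / (2 * u) * (2 * (-((1/4) * (2 * (t^2-1)^1 * (2*t)))) / β)) t :=
      (Real.hasDerivAt_sqrt (ne_of_gt hqpos)).comp t hq'
    set v' := s * (1 / (2 * u) * (2 * (-((1/4) * (2 * (t^2-1)^1 * (2*t)))) / β)) with hv'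
    have hv : HasDerivAt (fun t => s * Real.sqrt (q t)) v' t := hsq.const_mul s
    have hγ : HasDerivAt (fun t => (t, s * Real.sqrt (q t))) ((1:ℝ), v') t :=
      (hasDerivAt_id t).prodMk hv
    have hfd : HasFDerivAt f (fderiv ℝ f (t, s * u)) (t, s * u) :=
      ((hf.differentiable one_ne_zero) (t, s * u)).hasFDerivAt
    have hcomp : HasDerivAt g (fderiv ℝ f (t, s * u) (1, v')) t :=
      hfd.comp_hasDerivAt t hγ
    have hzero : fderiv ℝ f (t, s * u) (1, v') = 0 := by
      have hsplit : ((1:ℝ), v') = ((1:ℝ), (0:ℝ)) + v' • ((0:ℝ), (1:ℝ)) := by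
        simp [Prod.ext_iff]
      rw [hsplit, map_add, map_smul, smul_eq_mul]
      have hst := hstat (t, s * u)
      simp only at hst
      have hu2 : u ^ 2 = q t := Real.sq_sqrt hqpos.le
      have hune : u ≠ 0 := ne_of_gt hupos
      have hβne : β ≠ 0 := ne_of_gt hβ
      rcases hs with rfl | rfl
      · rw [hv']
        field_simp
        field_simp at hst
        nlinarith [hst]
      · rw [hv']
        field_simp
        field_simp at hst
        nlinarith [hst]
    rw [hzero] at hcomp; exact hcomp
  obtain ⟨c, hc, hceq⟩ := exists_hasDerivAt_eq_slope g (fun _ => 0) hlt gcont gderiv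
  have hba : b - a ≠ 0 := sub_ne_zero.mpr (ne_of_gt hlt)
  have hgba : g b = g a := by
    field_simp at hceq
    linarith
  exact hgba

set_option maxHeartbeats 4000000

/-- With the double-well potential `W(ε) = (1/4)(ε²-1)²` and Hamiltonian
`H(y) = (β/2)y₂² + W(y₁)`, every family `Ψ*` that is `C¹` in `y` and satisfies the
stationarity equation `∂₁Ψ*·βy₂ − ∂₂Ψ*·W'(y₁) = 0` can be written as a function of
`H` on each of the three phase-plane regions `P₁, P₂, P₀`. -/
theorem stmt6 (β : ℝ) (hβ : 0 < β)
    (W : ℝ → ℝ) (hW : W = fun ε => (1/4) * (ε^2 - 1)^2)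
    (H : ℝ × ℝ → ℝ) (hH : H = fun y => (β/2) * y.2^2 + W y.1)
    (P₁ P₂ P₀ : Set (ℝ × ℝ))
    (hP₁ : P₁ = {y : ℝ × ℝ | H y < 1/4 ∧ y.1 < 0})
    (hP₂ : P₂ = {y : ℝ × ℝ | H y < 1/4 ∧ y.1 > 0})
    (hP₀ : P₀ = (P₁ ∪ P₂)ᶜ)
    (Ψstar : ℝ → ℝ × ℝ → ℝ)
    (hsmooth : ∀ x ∈ Set.Icc (0:ℝ) 1, ContDiff ℝ 1 (Ψstar x))
    (hstat : ∀ x ∈ Set.Icc (0:ℝ) 1, ∀ y : ℝ × ℝ,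
      fderiv ℝ (Ψstar x) y (1, 0) * (β * y.2)
        - fderiv ℝ (Ψstar x) y (0, 1) * deriv W y.1 = 0) :
    ∃ α₀ α₁ α₂ : ℝ → ℝ → ℝ, ∀ x ∈ Set.Icc (0:ℝ) 1, ∀ y : ℝ × ℝ,
      (y ∈ P₀ → Ψstar x y = α₀ x (H y)) ∧
      (y ∈ P₁ → Ψstar x y = α₁ x (H y)) ∧
      (y ∈ P₂ → Ψstar x y = α₂ x (H y)) := by
  have hW' : ∀ t : ℝ, deriv W t = t^3 - t := by
    intro t
    have h1 : HasDerivAt (fun ε : ℝ => ε^2 - 1) (2*t) t := by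
      simpa using (hasDerivAt_pow 2 t).sub_const 1
    have h2 := (h1.pow 2).const_mul (1/4 : ℝ)
    rw [hW]
    have h3 : HasDerivAt (fun ε : ℝ => (1/4 : ℝ) * (ε^2-1)^2) (t^3 - t) t := by
      exact h2.congr_deriv (by rw [show (2:ℕ) - 1 = 1 from rfl]; push_cast; ring)
    exact h3.deriv
  have hstat' : ∀ x ∈ Icc (0:ℝ) 1, ∀ y : ℝ × ℝ,
      fderiv ℝ (Ψstar x) y (1,0) * (β * y.2)
        - fderiv ℝ (Ψstar x) y (0,1) * (y.1^3 - y.1) = 0 := by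
    intro x hx y
    have h := hstat x hx y
    rwa [hW'] at h
  have hHval : ∀ y : ℝ × ℝ, H y = β/2 * y.2^2 + (1/4)*(y.1^2-1)^2 := by
    intro y; rw [hH, hW]
  -- reach the left endpoint of the level curve
  have reachL : ∀ x ∈ Icc (0:ℝ) 1, ∀ y : ℝ × ℝ, y.1 ≤ 0 →
      Ψstar x y = Ψstar x (-Real.sqrt (1 + 2*Real.sqrt (H y)), 0) := by
    intro x hx y hy1
    set hh := H y with hhdef
    have hWy : (1/4)*(y.1^2-1)^2 ≤ hh := by
      rw [hhdef, hHval]; nlinarith [sq_nonneg y.2]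
    have hh0 : 0 ≤ hh := by
      rw [hhdef, hHval]; nlinarith [sq_nonneg y.2, sq_nonneg (y.1^2-1)]
    set r := Real.sqrt hh with hrdef
    have hr0 : 0 ≤ r := Real.sqrt_nonneg _
    have hr2 : r^2 = hh := Real.sq_sqrt hh0
    set cc := Real.sqrt (1 + 2*r) with hccdef
    have hcc0 : 0 ≤ cc := Real.sqrt_nonneg _
    have hcc2 : cc^2 = 1 + 2*r := Real.sq_sqrt (by linarith)
    have hy12 : y.1^2 ≤ 1 + 2*r := by nlinarith
    have hy1low : 1 - 2*r ≤ y.1^2 := by nlinarith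
    have hεcc : -cc ≤ y.1 := by nlinarith
    set s : ℝ := if 0 ≤ y.2 then 1 else -1 with hsdef
    have hs : s = 1 ∨ s = -1 := by
      rw [hsdef]; split <;> simp
    have hin : ∀ t ∈ Ioo (-cc) y.1, (1/4:ℝ)*(t^2-1)^2 < hh := by
      intro t ht
      obtain ⟨ht1, ht2⟩ := ht
      have h1 : t^2 < cc^2 := by nlinarith
      have h2 : y.1^2 < t^2 := by nlinarith
      nlinarith
    have harc := arc_lemma β hβ (Ψstar x) (hsmooth x hx) (hstat' x hx) s hh (-cc) y.1 hs hεcc hin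
    have hWcc : (2:ℝ)*(hh - (1/4)*((-cc)^2-1)^2)/β = 0 := by
      have : (1/4:ℝ)*((-cc)^2-1)^2 = hh := by nlinarith
      rw [this]; ring
    have hy2eq : s * Real.sqrt (2*(hh - (1/4)*(y.1^2-1)^2)/β) = y.2 := by
      have hq : 2*(hh - (1/4)*(y.1^2-1)^2)/β = y.2^2 := by
        rw [hhdef, hHval]; field_simp; ring
      rw [hq, Real.sqrt_sq_eq_abs]
      rcases le_or_gt 0 y.2 with h|h
      · rw [hsdef, if_pos h, abs_of_nonneg h]; ring
      · rw [hsdef, if_neg (not_le.mpr h), abs_of_neg h]; ring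
    rw [hWcc, hy2eq] at harc
    simpa using harc
  -- reach the right endpoint of the level curve
  have reachR : ∀ x ∈ Icc (0:ℝ) 1, ∀ y : ℝ × ℝ, 0 ≤ y.1 →
      Ψstar x y = Ψstar x (Real.sqrt (1 + 2*Real.sqrt (H y)), 0) := by
    intro x hx y hy1
    set hh := H y with hhdef
    have hWy : (1/4)*(y.1^2-1)^2 ≤ hh := by
      rw [hhdef, hHval]; nlinarith [sq_nonneg y.2]
    have hh0 : 0 ≤ hh := by
      rw [hhdef, hHval]; nlinarith [sq_nonneg y.2, sq_nonneg (y.1^2-1)]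
    set r := Real.sqrt hh with hrdef
    have hr0 : 0 ≤ r := Real.sqrt_nonneg _
    have hr2 : r^2 = hh := Real.sq_sqrt hh0
    set cc := Real.sqrt (1 + 2*r) with hccdef
    have hcc0 : 0 ≤ cc := Real.sqrt_nonneg _
    have hcc2 : cc^2 = 1 + 2*r := Real.sq_sqrt (by linarith)
    have hy12 : y.1^2 ≤ 1 + 2*r := by nlinarith
    have hy1low : 1 - 2*r ≤ y.1^2 := by nlinarith
    have hεcc : y.1 ≤ cc := by nlinarith
    set s : ℝ := if 0 ≤ y.2 then 1 else -1 with hsdef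
    have hs : s = 1 ∨ s = -1 := by
      rw [hsdef]; split <;> simp
    have hin : ∀ t ∈ Ioo y.1 cc, (1/4:ℝ)*(t^2-1)^2 < hh := by
      intro t ht
      obtain ⟨ht1, ht2⟩ := ht
      have h1 : t^2 < cc^2 := by nlinarith
      have h2 : y.1^2 < t^2 := by nlinarith
      nlinarith
    have harc := arc_lemma β hβ (Ψstar x) (hsmooth x hx) (hstat' x hx) s hh y.1 cc hs hεcc hin
    have hWcc : (2:ℝ)*(hh - (1/4)*(cc^2-1)^2)/β = 0 := by
      have : (1/4:ℝ)*(cc^2-1)^2 = hh := by nlinarith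
      rw [this]; ring
    have hy2eq : s * Real.sqrt (2*(hh - (1/4)*(y.1^2-1)^2)/β) = y.2 := by
      have hq : 2*(hh - (1/4)*(y.1^2-1)^2)/β = y.2^2 := by
        rw [hhdef, hHval]; field_simp; ring
      rw [hq, Real.sqrt_sq_eq_abs]
      rcases le_or_gt 0 y.2 with h|h
      · rw [hsdef, if_pos h, abs_of_nonneg h]; ring
      · rw [hsdef, if_neg (not_le.mpr h), abs_of_neg h]; ring
    rw [hWcc, hy2eq] at harc
    simpa using harc.symm
  -- link left and right endpoints through the top of the curve (needs h ≥ 1/4)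
  have link : ∀ x ∈ Icc (0:ℝ) 1, ∀ hh : ℝ, 1/4 ≤ hh →
      Ψstar x (Real.sqrt (1 + 2*Real.sqrt hh), 0)
        = Ψstar x (-Real.sqrt (1 + 2*Real.sqrt hh), 0) := by
    intro x hx hh hh4
    set r := Real.sqrt hh with hrdef
    have hr0 : 0 ≤ r := Real.sqrt_nonneg _
    have hr2 : r^2 = hh := Real.sq_sqrt (by linarith)
    have hrhalf : 1/2 ≤ r := by nlinarith
    set cc := Real.sqrt (1 + 2*r) with hccdef
    have hcc0 : 0 ≤ cc := Real.sqrt_nonneg _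
    have hcc2 : cc^2 = 1 + 2*r := Real.sq_sqrt (by linarith)
    have hin1 : ∀ t ∈ Ioo (0:ℝ) cc, (1/4:ℝ)*(t^2-1)^2 < hh := by
      intro t ht
      obtain ⟨ht1, ht2⟩ := ht
      have htsq : 0 < t^2 := pow_pos ht1 2
      have h1 : t^2 < cc^2 := by nlinarith
      have h2 : 0 < 2*r - (t^2-1) := by nlinarith
      have h3 : 0 < 2*r + (t^2-1) := by nlinarith
      nlinarith [mul_pos h2 h3]
    have hin2 : ∀ t ∈ Ioo (-cc) (0:ℝ), (1/4:ℝ)*(t^2-1)^2 < hh := by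
      intro t ht
      obtain ⟨ht1, ht2⟩ := ht
      have htsq : 0 < t^2 := by nlinarith [mul_pos (neg_pos.mpr ht2) (neg_pos.mpr ht2)]
      have h1 : t^2 < cc^2 := by nlinarith
      have h2 : 0 < 2*r - (t^2-1) := by nlinarith
      have h3 : 0 < 2*r + (t^2-1) := by nlinarith
      nlinarith [mul_pos h2 h3]
    have harc1 := arc_lemma β hβ (Ψstar x) (hsmooth x hx) (hstat' x hx) 1 hh 0 cc
      (Or.inl rfl) hcc0 hin1
    have harc2 := arc_lemma β hβ (Ψstar x) (hsmooth x hx) (hstat' x hx) 1 hh (-cc) 0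
      (Or.inl rfl) (by linarith) hin2
    have hWcc : (2:ℝ)*(hh - (1/4)*(cc^2-1)^2)/β = 0 := by
      have : (1/4:ℝ)*(cc^2-1)^2 = hh := by nlinarith
      rw [this]; ring
    have hWncc : (2:ℝ)*(hh - (1/4)*((-cc)^2-1)^2)/β = 0 := by
      have : (1/4:ℝ)*((-cc)^2-1)^2 = hh := by nlinarith
      rw [this]; ring
    rw [hWcc] at harc1
    rw [hWncc] at harc2
    simp only [Real.sqrt_zero, mul_zero, one_mul] at harc1 harc2
    rw [harc1, harc2]
  refine ⟨fun x hh => Ψstar x (-Real.sqrt (1 + 2*Real.sqrt hh), 0),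
          fun x hh => Ψstar x (-Real.sqrt (1 + 2*Real.sqrt hh), 0),
          fun x hh => Ψstar x (Real.sqrt (1 + 2*Real.sqrt hh), 0), ?_⟩
  intro x hx y
  refine ⟨?_, ?_, ?_⟩
  · intro hy0
    rw [hP₀, Set.mem_compl_iff] at hy0
    have h14 : 1/4 ≤ H y := by
      by_contra hlt
      push_neg at hlt
      apply hy0
      have hy1ne : y.1 ≠ 0 := by
        intro h0
        rw [hHval, h0] at hlt
        nlinarith [sq_nonneg y.2]
      rcases hy1ne.lt_or_gt with h|h
      · left; rw [hP₁]; exact ⟨hlt, h⟩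
      · right; rw [hP₂]; exact ⟨hlt, h⟩
    rcases le_or_gt y.1 0 with h|h
    · exact reachL x hx y h
    · rw [reachR x hx y h.le]; exact link x hx (H y) h14
  · intro hy1
    simp only [hP₁, mem_setOf_eq] at hy1
    exact reachL x hx y hy1.2.le
  · intro hy2
    simp only [hP₂, mem_setOf_eq] at hy2
    exact reachR x hx y hy2.2.le
end

section
/- Let σ be continuously differentiable, let u be a classical solution of the microkinetically regularized wave equation on [0,T] × [0,1], and let k : [0,T] × [0,1] → ℝ be such that for each t ∈ [0,T] the function k(t,·) solves the elliptic coupling problem with right-hand side f(x) = σ(∂ₓu(t,x)). Then β ∂ₜ²∂ₓu(t,x) = −( σ(∂ₓu(t,x)) − k(t,x) ) for all (t,x) ∈ [0,T] × [0,1]; that is, the strain ε = ∂ₓu satisfies the integro-differential equation ε̈ = −(1/β)(σ(ε) − k). -/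
open MeasureTheory

section Aux

open Function Set

lemma hasDerivAt_sect1 {f : ℝ × ℝ → ℝ} {t x : ℝ} (hf : DifferentiableAt ℝ f (t, x)) :
    HasDerivAt (fun s => f (s, x)) (fderiv ℝ f (t, x) (1, 0)) t := by
  have h1 : HasDerivAt (fun s : ℝ => (s, x)) ((1 : ℝ), (0 : ℝ)) t :=
    HasDerivAt.prodMk (hasDerivAt_id t) (hasDerivAt_const t x)
  exact hf.hasFDerivAt.comp_hasDerivAt t h1

lemma hasDerivAt_sect2 {f : ℝ × ℝ → ℝ} {t x : ℝ} (hf : DifferentiableAt ℝ f (t, x)) :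
    HasDerivAt (fun y => f (t, y)) (fderiv ℝ f (t, x) (0, 1)) x := by
  have h1 : HasDerivAt (fun y : ℝ => (t, y)) ((0 : ℝ), (1 : ℝ)) x :=
    HasDerivAt.prodMk (hasDerivAt_const x t) (hasDerivAt_id x)
  exact hf.hasFDerivAt.comp_hasDerivAt x h1

lemma pt_eq_fderiv {v : ℝ → ℝ → ℝ} {t x : ℝ} (hv : DifferentiableAt ℝ (uncurry v) (t, x)) :
    pt v t x = fderiv ℝ (uncurry v) (t, x) (1, 0) :=
  (hasDerivAt_sect1 (f := uncurry v) hv).deriv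

lemma px_eq_fderiv {v : ℝ → ℝ → ℝ} {t x : ℝ} (hv : DifferentiableAt ℝ (uncurry v) (t, x)) :
    px v t x = fderiv ℝ (uncurry v) (t, x) (0, 1) :=
  (hasDerivAt_sect2 (f := uncurry v) hv).deriv

lemma contDiff_pt {v : ℝ → ℝ → ℝ} {m n : WithTop ℕ∞} (hv : ContDiff ℝ n (uncurry v))
    (hmn : m + 1 ≤ n) : ContDiff ℝ m (uncurry (pt v)) := by
  have hd : Differentiable ℝ (uncurry v) := hv.differentiable (lt_of_lt_of_le zero_lt_one (le_trans le_add_self hmn)).ne'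
  have h : uncurry (pt v) = fun p : ℝ × ℝ => fderiv ℝ (uncurry v) p (1, 0) := by
    funext p
    exact pt_eq_fderiv (hd (p.1, p.2))
  rw [h]
  exact (hv.fderiv_right hmn).clm_apply contDiff_const

lemma contDiff_px {v : ℝ → ℝ → ℝ} {m n : WithTop ℕ∞} (hv : ContDiff ℝ n (uncurry v))
    (hmn : m + 1 ≤ n) : ContDiff ℝ m (uncurry (px v)) := by
  have hd : Differentiable ℝ (uncurry v) := hv.differentiable (lt_of_lt_of_le zero_lt_one (le_trans le_add_self hmn)).ne'
  have h : uncurry (px v) = fun p : ℝ × ℝ => fderiv ℝ (uncurry v) p (0, 1) := by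
    funext p
    exact px_eq_fderiv (hd (p.1, p.2))
  rw [h]
  exact (hv.fderiv_right hmn).clm_apply contDiff_const

lemma contDiff_sect1 {v : ℝ → ℝ → ℝ} {n : WithTop ℕ∞} (hv : ContDiff ℝ n (uncurry v)) (x : ℝ) :
    ContDiff ℝ n (fun s => v s x) :=
  hv.comp (contDiff_id.prodMk contDiff_const)

lemma contDiff_sect2 {v : ℝ → ℝ → ℝ} {n : WithTop ℕ∞} (hv : ContDiff ℝ n (uncurry v)) (t : ℝ) :
    ContDiff ℝ n (fun y => v t y) :=
  hv.comp (contDiff_const.prodMk contDiff_id)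

lemma clairaut {v : ℝ → ℝ → ℝ} (hv : ContDiff ℝ 2 (uncurry v)) (t x : ℝ) :
    pt (px v) t x = px (pt v) t x := by
  set f := uncurry v with hf
  have hd : Differentiable ℝ f := hv.differentiable (by norm_num)
  have hf1 : ContDiff ℝ 1 (fderiv ℝ f) := hv.fderiv_right (by norm_num)
  have hd' : Differentiable ℝ (fderiv ℝ f) := hf1.differentiable one_ne_zero
  have hsymm := second_derivative_symmetric (f' := fderiv ℝ f)
      (f'' := fderiv ℝ (fderiv ℝ f) (t, x))
      (fun y => (hd y).hasFDerivAt) (hd' (t, x)).hasFDerivAt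
  have key : ∀ w : ℝ × ℝ, ∀ q : ℝ × ℝ, HasFDerivAt (fun p => fderiv ℝ f p w)
      ((ContinuousLinearMap.apply ℝ ℝ w).comp (fderiv ℝ (fderiv ℝ f) q)) q := fun w q =>
    (ContinuousLinearMap.apply ℝ ℝ w).hasFDerivAt.comp q (hd' q).hasFDerivAt
  have e1 : pt (px v) t x = fderiv ℝ (fderiv ℝ f) (t, x) (1, 0) (0, 1) := by
    have hder : HasDerivAt (fun s => fderiv ℝ f (s, x) (0, 1))
        (fderiv ℝ (fderiv ℝ f) (t, x) (1, 0) (0, 1)) t := by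
      have h1 : HasDerivAt (fun s : ℝ => (s, x)) ((1 : ℝ), (0 : ℝ)) t :=
        HasDerivAt.prodMk (hasDerivAt_id t) (hasDerivAt_const t x)
      exact (key (0, 1) (t, x)).comp_hasDerivAt t h1
    have hfun : (fun s => px v s x) = fun s => fderiv ℝ f (s, x) (0, 1) := by
      funext s; exact px_eq_fderiv (hd (s, x))
    rw [pt]; rw [hfun]; exact hder.deriv
  have e2 : px (pt v) t x = fderiv ℝ (fderiv ℝ f) (t, x) (0, 1) (1, 0) := by
    have hder : HasDerivAt (fun y => fderiv ℝ f (t, y) (1, 0))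
        (fderiv ℝ (fderiv ℝ f) (t, x) (0, 1) (1, 0)) x := by
      have h1 : HasDerivAt (fun y : ℝ => (t, y)) ((0 : ℝ), (1 : ℝ)) x :=
        HasDerivAt.prodMk (hasDerivAt_const x t) (hasDerivAt_id x)
      exact (key (1, 0) (t, x)).comp_hasDerivAt x h1
    have hfun : (fun y => pt v t y) = fun y => fderiv ℝ f (t, y) (1, 0) := by
      funext y; exact pt_eq_fderiv (hd (t, y))
    rw [px]; rw [hfun]; exact hder.deriv
  rw [e1, e2, hsymm]

lemma deriv_zero_of_eqOn {f : ℝ → ℝ} {T t : ℝ} (hT : 0 < T)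
    (hf : DifferentiableAt ℝ f t) (ht : t ∈ Set.Icc 0 T)
    (h : ∀ s ∈ Set.Icc 0 T, f s = 0) : deriv f t = 0 := by
  have h1 : HasDerivWithinAt f (deriv f t) (Set.Icc 0 T) t := hf.hasDerivAt.hasDerivWithinAt
  have h2 : HasDerivWithinAt f 0 (Set.Icc 0 T) t :=
    (hasDerivWithinAt_const t _ 0).congr h (h t ht)
  exact (uniqueDiffOn_Icc hT t ht).eq_deriv _ h1 h2

end Aux

/-- for a classical solution `u` of the microkinetically regularized wave
equation, and `k(t,·)` solving the elliptic coupling problem with right-hand side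
`σ(∂ₓu(t,·))`, the strain `ε = ∂ₓu` satisfies the integro-differential equation
`β ε̈ = −(σ(ε) − k)` on `[0,T] × [0,1]`. -/
theorem stmt8 (β ρ : ℝ) (hβ : 0 < β) (hρ : 0 ≤ ρ) (T : ℝ) (hT : 0 < T)
    (σ : ℝ → ℝ) (hσ : ContDiff ℝ 1 σ)
    (u : ℝ → ℝ → ℝ) (hu : IsClassicalSolutionOn β ρ σ T u)
    (k : ℝ → ℝ → ℝ)
    (hk : ∀ t ∈ Set.Icc 0 T, SolvesCoupling β ρ (fun x => σ (px u t x)) (k t)) :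
    ∀ t ∈ Set.Icc 0 T, ∀ x ∈ Set.Icc (0:ℝ) 1,
      β * pt (pt (px u)) t x = -(σ (px u t x) - k t x) := by
  obtain ⟨hU4, hpde, hbc0, hbc1⟩ := hu
  intro t ht
  obtain ⟨hkC, hkeq, hk0', hk1'⟩ := hk t ht
  -- smoothness of iterated partials
  have hpt3 : ContDiff ℝ 3 (Function.uncurry (pt u)) := contDiff_pt hU4 (by norm_num)
  have hpx3 : ContDiff ℝ 3 (Function.uncurry (px u)) := contDiff_px hU4 (by norm_num)
  have hptt2 : ContDiff ℝ 2 (Function.uncurry (pt (pt u))) := contDiff_pt hpt3 (by norm_num)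
  have hpxtt1 : ContDiff ℝ 1 (Function.uncurry (px (pt (pt u)))) := contDiff_px hptt2 (by norm_num)
  -- mixed partials commute
  have hswap : ∀ x, pt (pt (px u)) t x = px (pt (pt u)) t x := by
    intro x
    have e1 : pt (px u) = px (pt u) := by
      funext s y
      exact clairaut (hU4.of_le (by norm_num)) s y
    have e2 : pt (pt (px u)) t x = pt (px (pt u)) t x := by rw [e1]
    rw [e2]
    exact clairaut (hpt3.of_le (by norm_num)) t x
  -- the flux function g
  set g : ℝ → ℝ := fun y => σ (px u t y) + β * px (pt (pt u)) t y with hgdef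
  have hsx : ContDiff ℝ 3 (fun y => px u t y) := contDiff_sect2 hpx3 t
  have hsxtt : ContDiff ℝ 1 (fun y => px (pt (pt u)) t y) := contDiff_sect2 hpxtt1 t
  have hstt : ContDiff ℝ 2 (fun y => pt (pt u) t y) := contDiff_sect2 hptt2 t
  have hg1 : ContDiff ℝ 1 g :=
    (hσ.comp (hsx.of_le (by norm_num))).add (contDiff_const.mul hsxtt)
  have hgd : Differentiable ℝ g := hg1.differentiable one_ne_zero
  have hgd' : Continuous (deriv g) := hg1.continuous_deriv le_rfl
  have hkd : Differentiable ℝ (k t) := hkC.differentiable (by norm_num)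
  have hkC1 : ContDiff ℝ 1 (deriv (k t)) :=
    (contDiff_succ_iff_deriv.mp (hkC.of_le (by norm_num : (2 : WithTop ℕ∞) ≤ 2))).2.2
  have hkd' : Differentiable ℝ (deriv (k t)) := hkC1.differentiable one_ne_zero
  -- the PDE on (0,1)
  have hApde : ∀ x ∈ Set.Ioo (0:ℝ) 1, deriv g x = ρ * pt (pt u) t x := by
    intro x hx
    exact (hpde t ht x hx).symm
  -- extension to [0,1]
  have hcont2 : Continuous fun y => ρ * pt (pt u) t y := continuous_const.mul hstt.continuous
  have hAext : Set.EqOn (deriv g) (fun y => ρ * pt (pt u) t y) (Set.Icc 0 1) := by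
    have hcl := Set.EqOn.closure (fun x hx => hApde x hx) hgd' hcont2
    rwa [closure_Ioo (by norm_num : (0:ℝ) ≠ 1)] at hcl
  -- the time boundary condition
  have hptu0 : ∀ s ∈ Set.Icc 0 T, pt u s 0 = 0 := fun s hs =>
    deriv_zero_of_eqOn hT (((contDiff_sect1 hU4 0).differentiable (by norm_num)) s) hs hbc0
  have hptt0 : pt (pt u) t 0 = 0 :=
    deriv_zero_of_eqOn hT (((contDiff_sect1 hpt3 0).differentiable (by norm_num)) t) ht hptu0
  have hg'0 : deriv g 0 = 0 := by
    have h0 := hAext (Set.left_mem_Icc.mpr (by norm_num))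
    rw [h0]
    simp [hptt0]
  have hgval1 : g 1 = 0 := hbc1 t ht
  -- second derivative of g on (0,1)
  have hsect_tt_deriv : ∀ x : ℝ, HasDerivAt (fun y => ρ * pt (pt u) t y)
      (ρ * px (pt (pt u)) t x) x := by
    intro x
    have hdx : DifferentiableAt ℝ (fun y => pt (pt u) t y) x :=
      (hstt.differentiable (by norm_num)) x
    have h1 : HasDerivAt (fun y => pt (pt u) t y) (px (pt (pt u)) t x) x := hdx.hasDerivAt
    exact h1.const_mul ρ
  have hdd_g : ∀ x ∈ Set.Ioo (0:ℝ) 1, HasDerivAt (deriv g) (ρ * px (pt (pt u)) t x) x := by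
    intro x hx
    have hev : deriv g =ᶠ[nhds x] fun y => ρ * pt (pt u) t y :=
      Filter.eventuallyEq_of_mem (Ioo_mem_nhds hx.1 hx.2) hApde
    exact (hsect_tt_deriv x).congr_of_eventuallyEq hev
  -- the difference d = g - k t
  set d : ℝ → ℝ := fun y => g y - k t y with hddef
  have hdd : Differentiable ℝ d := hgd.sub hkd
  have hderivd : deriv d = fun y => deriv g y - deriv (k t) y := by
    funext y; exact deriv_sub (hgd y) (hkd y)
  have hcontd' : Continuous (deriv d) := by
    rw [hderivd]; exact hgd'.sub (hkC.continuous_deriv (by norm_num))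
  have hd'0 : deriv d 0 = 0 := by rw [hderivd]; simp [hg'0, hk0']
  have hd1 : d 1 = 0 := by simp [hddef, hgval1, hk1']
  have hdd2 : ∀ x ∈ Set.Ioo (0:ℝ) 1, HasDerivAt (deriv d) ((ρ / β) * d x) x := by
    intro x hx
    have h1 := hdd_g x hx
    have h2 : HasDerivAt (deriv (k t)) (deriv (deriv (k t)) x) x := (hkd' x).hasDerivAt
    have h3 : HasDerivAt (deriv d) (ρ * px (pt (pt u)) t x - deriv (deriv (k t)) x) x := by
      rw [hderivd]; exact h1.sub h2
    have hval : (ρ / β) * d x = ρ * px (pt (pt u)) t x - deriv (deriv (k t)) x := by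
      have hkx : ρ * k t x - β * deriv (deriv (k t)) x = ρ * σ (px u t x) := hkeq x hx
      have hβ' : β ≠ 0 := ne_of_gt hβ
      simp only [hddef, hgdef]
      field_simp
      linear_combination (-1 : ℝ) * hkx
    rw [hval]
    exact h3
  -- the function q = (d²)'
  set q : ℝ → ℝ := fun y => deriv d y * d y + d y * deriv d y with hqdef
  have hq : ∀ x : ℝ, HasDerivAt (fun y => d y * d y) (q x) x :=
    fun x => (hdd x).hasDerivAt.mul (hdd x).hasDerivAt
  have hderivp : deriv (fun y => d y * d y) = q := funext fun x => (hq x).deriv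
  have hcontq : Continuous q :=
    (hcontd'.mul hdd.continuous).add (hdd.continuous.mul hcontd')
  have hqd : ∀ x ∈ Set.Ioo (0:ℝ) 1, HasDerivAt q
      ((ρ / β * d x) * d x + deriv d x * deriv d x +
        (deriv d x * deriv d x + d x * (ρ / β * d x))) x := by
    intro x hx
    exact ((hdd2 x hx).mul (hdd x).hasDerivAt).add ((hdd x).hasDerivAt.mul (hdd2 x hx))
  have hqmono : MonotoneOn q (Set.Icc 0 1) := by
    apply monotoneOn_of_deriv_nonneg (convex_Icc 0 1) hcontq.continuousOn
    · rw [interior_Icc]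
      exact fun x hx => ((hqd x hx).differentiableAt).differentiableWithinAt
    · rw [interior_Icc]
      intro x hx
      rw [(hqd x hx).deriv]
      have h1 : 0 ≤ ρ / β := div_nonneg hρ hβ.le
      nlinarith [mul_self_nonneg (d x), mul_self_nonneg (deriv d x),
        mul_nonneg h1 (mul_self_nonneg (d x))]
  have hq0 : q 0 = 0 := by simp [hqdef, hd'0]
  have hqnonneg : ∀ x ∈ Set.Icc (0:ℝ) 1, 0 ≤ q x := by
    intro x hx
    have hm := hqmono (Set.left_mem_Icc.mpr (by norm_num)) hx hx.1
    rwa [hq0] at hm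
  have hpmono : MonotoneOn (fun y => d y * d y) (Set.Icc 0 1) := by
    apply monotoneOn_of_deriv_nonneg (convex_Icc 0 1)
      (hdd.continuous.mul hdd.continuous).continuousOn
    · rw [interior_Icc]
      exact fun x _ => (hq x).differentiableAt.differentiableWithinAt
    · rw [interior_Icc]
      intro x hx
      rw [show d * d = fun y => d y * d y from rfl, hderivp]
      exact hqnonneg x ⟨hx.1.le, hx.2.le⟩
  have hdzero : ∀ x ∈ Set.Icc (0:ℝ) 1, d x = 0 := by
    intro x hx
    have h1 : d x * d x ≤ d 1 * d 1 := hpmono hx (Set.right_mem_Icc.mpr (by norm_num)) hx.2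
    rw [hd1] at h1
    have h2 : d x * d x = 0 := le_antisymm (by simpa using h1) (mul_self_nonneg (d x))
    exact mul_self_eq_zero.mp h2
  -- conclusion
  intro x hx
  have hdx := hdzero x hx
  have hgk : σ (px u t x) + β * px (pt (pt u)) t x = k t x := by
    have hdx' : g x - k t x = 0 := hdx
    have hgx : g x = σ (px u t x) + β * px (pt (pt u)) t x := rfl
    linarith [hgx ▸ hdx']
  rw [hswap x]
  linarith [hgk]
end

section
/- Let β > 0, c ≠ 0, ρ ≥ 0, λ, λ̃ ∈ ℝ, let σ : ℝ → ℝ be continuous with σ(ε⁺) = 0, and suppose p ∈ C²(ℝ) satisfies ρ c² p(x) = σ(p(x)) + β c² p''(x) + λ + λ̃ x for all x ∈ ℝ and lim_{x→∞} p(x) = lim_{x→−∞} p(x) = ε⁺. Then λ̃ = 0 and λ = ρ c² ε⁺. -/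
open Filter Set

/-- if `p ∈ C²(ℝ)` satisfies `ρc²p = σ(p) + βc²p'' + λ + λ̃x` and
`p(x) → ε⁺` as `x → ±∞`, where `σ` is continuous with `σ(ε⁺) = 0`, then the
integration constants are `λ̃ = 0` and `λ = ρc²ε⁺`. -/
theorem stmt11 (β ρ c εp lam lamt : ℝ) (hβ : 0 < β) (hρ : 0 ≤ ρ) (hc : c ≠ 0)
    (σ : ℝ → ℝ) (hσ : Continuous σ) (hσεp : σ εp = 0)
    (p : ℝ → ℝ) (hp : ContDiff ℝ 2 p)
    (hode : ∀ x : ℝ,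
      ρ * c^2 * p x = σ (p x) + β * c^2 * deriv (deriv p) x + lam + lamt * x)
    (hlimTop : Tendsto p atTop (nhds εp)) (hlimBot : Tendsto p atBot (nhds εp)) :
    lamt = 0 ∧ lam = ρ * c^2 * εp := by
  have hpd : Differentiable ℝ p := hp.differentiable (by norm_num)
  have hpd1 : ContDiff ℝ 1 (deriv p) := (contDiff_succ_iff_deriv.mp (show ContDiff ℝ (1+1) p from hp)).2.2
  have hpd' : Differentiable ℝ (deriv p) := hpd1.differentiable (by norm_num)
  -- MVT on [2n, 2n+1] : ξ n with deriv p (ξ n) = p(2n+1) - p(2n)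
  have hξ : ∀ n : ℕ, ∃ x ∈ Ioo (2*(n:ℝ)) (2*n+1),
      deriv p x = (p (2*n+1) - p (2*n)) / ((2*n+1) - 2*n) := by
    intro n
    exact exists_deriv_eq_slope p (by linarith) (hpd.continuous.continuousOn)
      (hpd.differentiableOn)
  choose ξ hξmem hξval using hξ
  have hξgt : ∀ n : ℕ, 2*(n:ℝ) < ξ n := fun n => (hξmem n).1
  have hξlt : ∀ n : ℕ, ξ n < 2*n+1 := fun n => (hξmem n).2
  have hξtop : Tendsto ξ atTop atTop := by
    apply tendsto_atTop_mono (fun n => (hξgt n).le)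
    exact (tendsto_natCast_atTop_atTop.const_mul_atTop (by norm_num : (0:ℝ) < 2))
  have hξlt' : ∀ n : ℕ, ξ n < ξ (n+1) := by
    intro n
    have h1 := hξlt n
    have h2 := hξgt (n+1)
    push_cast at h2
    linarith
  -- deriv p (ξ n) → 0
  have hdξ : Tendsto (fun n => deriv p (ξ n)) atTop (nhds 0) := by
    have h1 : Tendsto (fun n : ℕ => p (2*(n:ℝ)+1)) atTop (nhds εp) :=
      hlimTop.comp (by
        apply tendsto_atTop_add_const_right
        exact tendsto_natCast_atTop_atTop.const_mul_atTop (by norm_num : (0:ℝ) < 2))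
    have h2 : Tendsto (fun n : ℕ => p (2*(n:ℝ))) atTop (nhds εp) :=
      hlimTop.comp (tendsto_natCast_atTop_atTop.const_mul_atTop (by norm_num : (0:ℝ) < 2))
    have := h1.sub h2
    rw [sub_self] at this
    apply this.congr
    intro n
    rw [hξval n]
    ring_nf
  -- MVT on [ξ n, ξ (n+1)] for deriv p
  have hη : ∀ n : ℕ, ∃ x ∈ Ioo (ξ n) (ξ (n+1)),
      deriv (deriv p) x = (deriv p (ξ (n+1)) - deriv p (ξ n)) / (ξ (n+1) - ξ n) := by
    intro n
    exact exists_deriv_eq_slope (deriv p) (hξlt' n) (hpd'.continuous.continuousOn)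
      (hpd'.differentiableOn)
  choose η hηmem hηval using hη
  have hηtop : Tendsto η atTop atTop :=
    tendsto_atTop_mono (fun n => (hηmem n).1.le) hξtop
  -- gap ≥ 1
  have hgap : ∀ n : ℕ, 1 ≤ ξ (n+1) - ξ n := by
    intro n
    have h1 := hξlt n
    have h2 := hξgt (n+1)
    push_cast at h2
    linarith
  -- p''(η n) → 0
  have hp''η : Tendsto (fun n => deriv (deriv p) (η n)) atTop (nhds 0) := by
    rw [tendsto_zero_iff_abs_tendsto_zero]
    have hd0 : Tendsto (fun n => |deriv p (ξ (n+1)) - deriv p (ξ n)|) atTop (nhds 0) := by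
      have := (hdξ.comp (tendsto_add_atTop_nat 1)).sub hdξ
      rw [sub_self] at this
      simpa using this.abs
    apply squeeze_zero (fun n => abs_nonneg _) _ hd0
    intro n
    rw [hηval n, abs_div]
    have hg := hgap n
    have hgpos : (0:ℝ) < ξ (n+1) - ξ n := by linarith
    rw [abs_of_pos hgpos]
    calc |deriv p (ξ (n+1)) - deriv p (ξ n)| / (ξ (n+1) - ξ n)
        ≤ |deriv p (ξ (n+1)) - deriv p (ξ n)| / 1 := by
          apply div_le_div_of_nonneg_left (abs_nonneg _) (by norm_num) hg
      _ = _ := by rw [div_one]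
  -- limits of building blocks
  have hpη : Tendsto (fun n => p (η n)) atTop (nhds εp) := hlimTop.comp hηtop
  have hσpη : Tendsto (fun n => σ (p (η n))) atTop (nhds 0) := by
    have := (hσ.tendsto εp).comp hpη
    rwa [hσεp] at this
  have hT : Tendsto (fun n => lamt * η n) atTop (nhds (ρ * c^2 * εp - lam)) := by
    have key : Tendsto (fun n => ρ * c^2 * p (η n) - σ (p (η n)) - lam
        - β * c^2 * deriv (deriv p) (η n)) atTop
        (nhds (ρ * c^2 * εp - 0 - lam - β * c^2 * 0)) := by
      exact (((hpη.const_mul (ρ * c^2)).sub hσpη).sub tendsto_const_nhds).sub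
        (hp''η.const_mul (β * c^2))
    have heq : ∀ n, lamt * η n = ρ * c^2 * p (η n) - σ (p (η n)) - lam
        - β * c^2 * deriv (deriv p) (η n) := by
      intro n
      have := hode (η n)
      linarith
    simp only [mul_zero, sub_zero] at key
    exact key.congr (fun n => (heq n).symm)
  have hlamt : lamt = 0 := by
    by_contra h
    have : Tendsto η atTop (nhds ((ρ * c^2 * εp - lam) / lamt)) := by
      have := hT.div_const lamt
      apply this.congr
      intro n
      field_simp
    exact not_tendsto_atTop_of_tendsto_nhds this hηtop
  refine ⟨hlamt, ?_⟩
  have h0 : Tendsto (fun _ : ℕ => (0:ℝ)) atTop (nhds (ρ * c^2 * εp - lam)) := by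
    apply hT.congr
    intro n
    rw [hlamt, zero_mul]
  have := tendsto_nhds_unique h0 tendsto_const_nhds
  linarith
end

section
/- Let β > 0, ρ > 0, c > 0 with ρc² > 2, let σ(ε) = ε³ − ε, set γ = √((ρc² − 2)/(βc²)) and B = √(ρc²/2), and define p₊(x) = 1 + (ρc² − 2)/(1 + B cosh(γx)) and p₋(x) = 1 + (ρc² − 2)/(1 − B cosh(γx)) (the denominator of p₋ is strictly negative for all x since B > 1). Then the amplitudes satisfy sup_{x∈ℝ} |1 − p₊(x)| = c√(2ρ) − 2 and sup_{x∈ℝ} |1 − p₋(x)| = c√(2ρ) + 2; that is, the velocity–amplitude relation A(c) = c√(2ρ) ± 2 holds for the two families of pulses. -/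
/-!
Both amplitudes are attained at the crest `x = 0`: since `cosh (γ x) ≥ 1 = cosh 0`, the quantities
`|1 - p₊ x| = (ρc² - 2) / (1 + B cosh (γ x))` and `|1 - p₋ x| = (ρc² - 2) / (B cosh (γ x) - 1)` are
largest there. With `ρc² - 2 = 2 (B² - 1) = 2 (B - 1) (B + 1)` the two maxima are `2B ∓ 2`, and
`c √(2ρ) = 2B`.
-/

open Real Set

theorem ciSup_eq_of_forall_le_apply {ι α : Type*} [ConditionallyCompletePartialOrderSup α]
    {f : ι → α} (i : ι) (h : ∀ j, f j ≤ f i) : ⨆ j, f j = f i :=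
  IsGreatest.csSup_eq ⟨mem_range_self i, forall_mem_range.2 h⟩

theorem iSup_abs_div_one_add_mul_cosh {a B : ℝ} (γ : ℝ) (ha : 0 ≤ a) (hB : 0 ≤ B) :
    ⨆ x, |a / (1 + B * cosh (γ * x))| = a / (1 + B) := by
  have hden : ∀ x, 1 + B ≤ 1 + B * cosh (γ * x) := fun x ↦ by
    nlinarith [one_le_cosh (γ * x)]
  have habs : ∀ x, |a / (1 + B * cosh (γ * x))| = a / (1 + B * cosh (γ * x)) := fun x ↦
    abs_of_nonneg (div_nonneg ha (by linarith [hden x]))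
  simp only [habs]
  refine (ciSup_eq_of_forall_le_apply 0 fun x ↦ ?_).trans (by simp)
  simpa using div_le_div_of_nonneg_left ha (by linarith) (hden x)

theorem iSup_abs_div_one_sub_mul_cosh {a B : ℝ} (γ : ℝ) (ha : 0 ≤ a) (hB : 1 < B) :
    ⨆ x, |a / (1 - B * cosh (γ * x))| = a / (B - 1) := by
  have hden : ∀ x, B - 1 ≤ B * cosh (γ * x) - 1 := fun x ↦ by
    nlinarith [one_le_cosh (γ * x)]
  have habs : ∀ x, |a / (1 - B * cosh (γ * x))| = a / (B * cosh (γ * x) - 1) := fun x ↦ by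
    rw [abs_div, abs_of_nonneg ha, abs_sub_comm, abs_of_pos (by linarith [hden x])]
  simp only [habs]
  refine (ciSup_eq_of_forall_le_apply 0 fun x ↦ ?_).trans (by simp)
  simpa using div_le_div_of_nonneg_left ha (by linarith) (hden x)

theorem mul_sqrt_two_mul_eq_two_mul_sqrt {ρ c : ℝ} (hc : 0 ≤ c) :
    c * √(2 * ρ) = 2 * √(ρ * c ^ 2 / 2) :=
  calc c * √(2 * ρ) = √(c ^ 2) * √(2 * ρ) := by rw [sqrt_sq hc]
    _ = √(2 ^ 2 * (ρ * c ^ 2 / 2)) := by rw [← sqrt_mul (sq_nonneg c)]; ring_nf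
    _ = 2 * √(ρ * c ^ 2 / 2) := by rw [sqrt_mul (by norm_num), sqrt_sq (by norm_num)]

theorem stmt14_general (ρ c : ℝ) (hc : 0 < c)
    (hsup : ρ * c^2 > 2)
    (γ B : ℝ)
    (hB : B = Real.sqrt (ρ * c^2 / 2))
    (pPlus pMinus : ℝ → ℝ)
    (hpPlus : pPlus = fun x => 1 + (ρ * c^2 - 2) / (1 + B * Real.cosh (γ * x)))
    (hpMinus : pMinus = fun x => 1 + (ρ * c^2 - 2) / (1 - B * Real.cosh (γ * x))) :
    (⨆ x : ℝ, |1 - pPlus x|) = c * Real.sqrt (2 * ρ) - 2 ∧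
    (⨆ x : ℝ, |1 - pMinus x|) = c * Real.sqrt (2 * ρ) + 2 := by
  have hB2 : B ^ 2 = ρ * c ^ 2 / 2 := hB ▸ sq_sqrt (by linarith)
  have hB1 : 1 < B := by nlinarith [hB ▸ sqrt_nonneg (ρ * c ^ 2 / 2)]
  have ha : 0 ≤ ρ * c ^ 2 - 2 := by linarith
  rw [mul_sqrt_two_mul_eq_two_mul_sqrt hc.le, ← hB]
  subst hpPlus hpMinus
  simp only [sub_add_cancel_left, abs_neg]
  rw [iSup_abs_div_one_add_mul_cosh γ ha (by linarith), iSup_abs_div_one_sub_mul_cosh γ ha hB1,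
    div_eq_iff (by linarith), div_eq_iff (by linarith)]
  constructor <;> linear_combination -2 * hB2

/-- the velocity–amplitude relation `A(c) = c√(2ρ) ± 2` for the two
explicit pulse solutions `p₊(x) = 1 + (ρc²−2)/(1 + B cosh(γx))` and
`p₋(x) = 1 + (ρc²−2)/(1 − B cosh(γx))` with `γ = √((ρc²−2)/(βc²))`, `B = √(ρc²/2)`:
`sup_x |1 − p₊(x)| = c√(2ρ) − 2` and `sup_x |1 − p₋(x)| = c√(2ρ) + 2`. -/
theorem stmt14 (β ρ c : ℝ) (hβ : 0 < β) (hρ : 0 < ρ) (hc : 0 < c)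
    (hsup : ρ * c^2 > 2)
    (σ : ℝ → ℝ) (hσ : σ = fun ε => ε^3 - ε)
    (γ B : ℝ) (hγ : γ = Real.sqrt ((ρ * c^2 - 2) / (β * c^2)))
    (hB : B = Real.sqrt (ρ * c^2 / 2))
    (pPlus pMinus : ℝ → ℝ)
    (hpPlus : pPlus = fun x => 1 + (ρ * c^2 - 2) / (1 + B * Real.cosh (γ * x)))
    (hpMinus : pMinus = fun x => 1 + (ρ * c^2 - 2) / (1 - B * Real.cosh (γ * x))) :
    (⨆ x : ℝ, |1 - pPlus x|) = c * Real.sqrt (2 * ρ) - 2 ∧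
    (⨆ x : ℝ, |1 - pMinus x|) = c * Real.sqrt (2 * ρ) + 2 :=
  stmt14_general ρ c hc hsup γ B hB pPlus pMinus hpPlus hpMinus
end

section
/- Let β > 0, ρ ≥ 0, c ≠ 0, let σ ∈ C¹(ℝ) with σ(ε⁺) = 0. Suppose p ∈ C²(ℝ) is a nonconstant solution of the traveling-wave equation β c² p''(x) = −σ(p(x)) + ρ c² (p(x) − ε⁺) satisfying lim_{x→∞} p(x) = lim_{x→−∞} p(x) = ε⁺ and lim_{x→∞} p'(x) = lim_{x→−∞} p'(x) = 0 (a homoclinic orbit attached to (ε⁺, 0)). Then ρ c² ≥ σ'(ε⁺). -/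
open Filter

/-- if the traveling-wave equation
`β c² p'' = −σ(p) + ρ c² (p − ε⁺)` possesses a nonconstant homoclinic orbit attached
to `(ε⁺, 0)` (i.e. `p → ε⁺` and `p' → 0` at `±∞`), then `ρ c² ≥ σ'(ε⁺)`. -/
theorem stmt15 (β ρ c εp : ℝ) (hβ : 0 < β) (hρ : 0 ≤ ρ) (hc : c ≠ 0)
    (σ : ℝ → ℝ) (hσ : ContDiff ℝ 1 σ) (hσεp : σ εp = 0)
    (p : ℝ → ℝ) (hp : ContDiff ℝ 2 p)
    (hnonconst : ∃ x₁ x₂ : ℝ, p x₁ ≠ p x₂)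
    (hode : ∀ x : ℝ, β * c^2 * deriv (deriv p) x = -σ (p x) + ρ * c^2 * (p x - εp))
    (hlimTop : Tendsto p atTop (nhds εp)) (hlimBot : Tendsto p atBot (nhds εp))
    (hlimTop' : Tendsto (deriv p) atTop (nhds 0))
    (hlimBot' : Tendsto (deriv p) atBot (nhds 0)) :
    ρ * c^2 ≥ deriv σ εp := by
  by_contra hlt
  push_neg at hlt
  set k := ρ * c ^ 2 with hk
  have hbc : 0 < β * c ^ 2 := by positivity
  have hσc : Continuous σ := hσ.continuous
  have hσd : Differentiable ℝ σ := hσ.differentiable one_ne_zero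
  -- the potential W and its derivative g
  set g : ℝ → ℝ := fun u => σ u - k * (u - εp) with hgdef
  set W : ℝ → ℝ := fun u => (∫ t in εp..u, σ t) - k / 2 * (u - εp) ^ 2 with hWdef
  have hW : ∀ u, HasDerivAt W (g u) u := by
    intro u
    have h1 : HasDerivAt (fun u => ∫ t in εp..u, σ t) (σ u) u :=
      intervalIntegral.integral_hasDerivAt_right (hσc.intervalIntegrable _ _)
        (hσc.stronglyMeasurableAtFilter _ _) hσc.continuousAt
    have h2 : HasDerivAt (fun u => k / 2 * (u - εp) ^ 2)
        (k / 2 * (2 * (u - εp) ^ 1 * 1)) u :=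
      (((hasDerivAt_id u).sub_const εp).pow 2).const_mul (k / 2)
    have := h1.sub h2
    refine this.congr_deriv ?_
    simp only [hgdef]
    ring
  -- p is C², so it and its derivative are differentiable
  have hp1 : Differentiable ℝ p := hp.differentiable (by norm_num)
  have hp2 : ContDiff ℝ 1 (deriv p) := by
    have h := (contDiff_succ_iff_deriv (n := 1)).mp (by exact_mod_cast hp)
    exact h.2.2
  have hp2d : Differentiable ℝ (deriv p) := hp2.differentiable one_ne_zero
  -- the conserved energy
  set E : ℝ → ℝ := fun x => β * c ^ 2 / 2 * (deriv p x) ^ 2 + W (p x) with hEdef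
  have hE : ∀ x, HasDerivAt E 0 x := by
    intro x
    have hdp : HasDerivAt p (deriv p x) x := (hp1 x).hasDerivAt
    have hdp2 : HasDerivAt (deriv p) (deriv (deriv p) x) x := (hp2d x).hasDerivAt
    have h1 : HasDerivAt (fun y => β * c ^ 2 / 2 * (deriv p y) ^ 2)
        (β * c ^ 2 / 2 * (2 * (deriv p x) ^ 1 * deriv (deriv p) x)) x :=
      (hdp2.pow 2).const_mul (β * c ^ 2 / 2)
    have h2 : HasDerivAt (fun y => W (p y)) (g (p x) * deriv p x) x :=
      (hW (p x)).comp x hdp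
    have h3 := h1.add h2
    have h0 : β * c ^ 2 * deriv (deriv p) x = -σ (p x) + k * (p x - εp) := hode x
    have : β * c ^ 2 / 2 * (2 * (deriv p x) ^ 1 * deriv (deriv p) x)
        + g (p x) * deriv p x = 0 := by
      simp only [hgdef, pow_one]
      linear_combination (deriv p x) * h0
    rwa [this] at h3
  have hEconst : ∀ x, E x = E 0 := fun x =>
    is_const_of_deriv_eq_zero (fun y => (hE y).differentiableAt)
      (fun y => (hE y).deriv) x 0
  have hWεp : W εp = 0 := by simp [hWdef]
  have hE0 : E 0 = 0 := by
    have ht : Tendsto E atTop (nhds 0) := by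
      have t1 : Tendsto (fun x => β * c ^ 2 / 2 * (deriv p x) ^ 2) atTop
          (nhds (β * c ^ 2 / 2 * 0 ^ 2)) := (hlimTop'.pow 2).const_mul _
      have t2 : Tendsto (fun x => W (p x)) atTop (nhds (W εp)) :=
        (hW εp).continuousAt.tendsto.comp hlimTop
      have := t1.add t2
      simpa [hWεp] using this
    have tc : Tendsto E atTop (nhds (E 0)) := by
      rw [show E = fun _ => E 0 from funext hEconst]
      exact tendsto_const_nhds
    exact tendsto_nhds_unique tc ht
  have hWle : ∀ x, W (p x) ≤ 0 := by
    intro x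
    have h := hEconst x
    rw [hE0] at h
    simp only [hEdef] at h
    have h2 : 0 ≤ β * c ^ 2 / 2 * deriv p x ^ 2 := by positivity
    clear_value W E
    linarith
  -- g has positive derivative at εp
  have hgεp : g εp = 0 := by simp [hgdef, hσεp]
  have ha : 0 < deriv σ εp - k := by linarith
  have hg : HasDerivAt g (deriv σ εp - k) εp := by
    have h1 : HasDerivAt σ (deriv σ εp) εp := (hσd εp).hasDerivAt
    have h2 : HasDerivAt (fun u => k * (u - εp)) (k * 1) εp :=
      ((hasDerivAt_id εp).sub_const εp).const_mul k
    have := h1.sub h2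
    refine this.congr_deriv ?_
    ring
  rw [hasDerivAt_iff_tendsto_slope] at hg
  have hev : ∀ᶠ u in nhdsWithin εp {εp}ᶜ, 0 < slope g εp u :=
    hg.eventually (eventually_gt_nhds ha)
  rw [eventually_iff, Metric.mem_nhdsWithin_iff] at hev
  obtain ⟨δ, hδ, hsub⟩ := hev
  have hδ' : ∀ u : ℝ, |u - εp| < δ → u ≠ εp → 0 < slope g εp u := fun u h1 h2 =>
    hsub ⟨by simpa [Real.dist_eq] using h1, h2⟩
  -- near εp (but not at εp), W is positive
  have hWpos : ∀ v, v ≠ εp → |v - εp| < δ → 0 < W v := by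
    intro v hv hvδ
    have slopepos : ∀ ξ, ξ ≠ εp → |ξ - εp| < δ → 0 < g ξ / (ξ - εp) := by
      intro ξ h1 h2
      have := hδ' ξ h2 h1
      rwa [slope_def_field, hgεp, sub_zero] at this
    rcases lt_or_gt_of_ne hv with h | h
    · obtain ⟨ξ, hξ, hξeq⟩ := exists_hasDerivAt_eq_slope W g h
        (fun u _ => (hW u).continuousAt.continuousWithinAt) (fun u _ => hW u)
      have hξne : ξ ≠ εp := ne_of_lt hξ.2
      have hξδ : |ξ - εp| < δ := by
        rw [abs_of_neg (by linarith [hξ.2])]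
        rw [abs_of_neg (by linarith)] at hvδ
        linarith [hξ.1]
      have hsp := slopepos ξ hξne hξδ
      have hgneg : g ξ < 0 := by
        rcases div_pos_iff.mp hsp with ⟨_, h2⟩ | ⟨h1, _⟩
        · linarith [hξ.2]
        · exact h1
      rw [hξeq, hWεp] at hgneg
      have hd : 0 < εp - v := by linarith
      rcases div_neg_iff.mp hgneg with ⟨_, h2⟩ | ⟨h1, _⟩
      · linarith
      · linarith
    · obtain ⟨ξ, hξ, hξeq⟩ := exists_hasDerivAt_eq_slope W g h
        (fun u _ => (hW u).continuousAt.continuousWithinAt) (fun u _ => hW u)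
      have hξne : ξ ≠ εp := ne_of_gt hξ.1
      have hξδ : |ξ - εp| < δ := by
        rw [abs_of_pos (by linarith [hξ.1])]
        rw [abs_of_pos (by linarith)] at hvδ
        linarith [hξ.2]
      have hsp := slopepos ξ hξne hξδ
      have hgpos : 0 < g ξ := by
        rcases div_pos_iff.mp hsp with ⟨h1, _⟩ | ⟨_, h2⟩
        · exact h1
        · linarith [hξ.1]
      rw [hξeq, hWεp] at hgpos
      have hd : 0 < v - εp := by linarith
      rcases div_pos_iff.mp hgpos with ⟨h1, _⟩ | ⟨_, h2⟩
      · linarith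
      · linarith
  -- p takes a value ≠ εp
  obtain ⟨x₁, x₂, hx⟩ := hnonconst
  obtain ⟨x₀, hx₀⟩ : ∃ x₀, p x₀ ≠ εp := by
    by_cases h : p x₁ = εp
    · exact ⟨x₂, fun h2 => hx (h.trans h2.symm)⟩
    · exact ⟨x₁, h⟩
  -- since W(p x) ≤ 0, any value of p is either εp or at distance ≥ δ
  have hfar : ∀ x, p x ≠ εp → δ ≤ |p x - εp| := by
    intro x hxne
    by_contra h
    push_neg at h
    exact absurd (hWle x) (not_le.mpr (hWpos _ hxne h))
  -- pick X with |p X - εp| < δ/2 and use IVT on |p · - εp|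
  obtain ⟨X, hX⟩ : ∃ X, |p X - εp| < δ / 2 := by
    have := (Metric.tendsto_nhds.mp hlimTop (δ / 2) (by positivity)).exists
    simpa [Real.dist_eq] using this
  set q : ℝ → ℝ := fun x => |p x - εp| with hqdef
  have hqc : Continuous q := (hp.continuous.sub continuous_const).abs
  have hmem : δ / 2 ∈ Set.uIcc (q x₀) (q X) := by
    have h1 : δ ≤ q x₀ := hfar x₀ hx₀
    have h2 : q X ≤ δ / 2 := le_of_lt hX
    rw [Set.uIcc_comm]
    exact Set.Icc_subset_uIcc ⟨h2, by linarith⟩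
  obtain ⟨x, _, hxq⟩ := intermediate_value_uIcc (hqc.continuousOn (s := Set.uIcc x₀ X)) hmem
  have hne : p x ≠ εp := by
    intro h
    rw [hqdef] at hxq
    simp only [h, sub_self, abs_zero] at hxq
    linarith
  have hlt' : |p x - εp| < δ := by
    have : q x = δ / 2 := hxq
    rw [hqdef] at this
    simp only at this
    linarith [this]
  exact absurd (hWle x) (not_le.mpr (hWpos _ hne hlt'))
end

section
/- Let β > 0, c ≠ 0, let σ ∈ C¹(ℝ) with σ(ε⁺) = 0 and σ'(ε⁺) > 0. Then every p ∈ C²(ℝ) satisfying β c² p''(x) = −σ(p(x)) for all x ∈ ℝ together with lim_{x→±∞} p(x) = ε⁺ and lim_{x→±∞} p'(x) = 0 is constant, p ≡ ε⁺. In other words, in the case ρ = 0 no nonconstant pulse solutions with far-field strain ε⁺ exist. -/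
open Filter

/-- in the case `ρ = 0` there are no nonconstant pulses: every `C²`
solution of `β c² p'' = −σ(p)` with `p → ε⁺` and `p' → 0` at `±∞`, where
`σ(ε⁺) = 0` and `σ'(ε⁺) > 0`, is identically `ε⁺`. -/
theorem stmt16 (β c εp : ℝ) (hβ : 0 < β) (hc : c ≠ 0)
    (σ : ℝ → ℝ) (hσ : ContDiff ℝ 1 σ) (hσεp : σ εp = 0) (hσ' : 0 < deriv σ εp)
    (p : ℝ → ℝ) (hp : ContDiff ℝ 2 p)
    (hode : ∀ x : ℝ, β * c^2 * deriv (deriv p) x = -σ (p x))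
    (hlimTop : Tendsto p atTop (nhds εp)) (hlimBot : Tendsto p atBot (nhds εp))
    (hlimTop' : Tendsto (deriv p) atTop (nhds 0))
    (hlimBot' : Tendsto (deriv p) atBot (nhds 0)) :
    ∀ x : ℝ, p x = εp := by
  have hσc : Continuous σ := hσ.continuous
  have hσ'c : Continuous (deriv σ) := hσ.continuous_deriv le_rfl
  have hc2 : 0 < c^2 := by positivity
  -- get δ > 0 with deriv σ > 0 on the closed ball of radius δ
  obtain ⟨ε, hε, hball⟩ := Metric.mem_nhds_iff.mp
    ((isOpen_lt continuous_const hσ'c).mem_nhds hσ')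
  set δ : ℝ := ε / 2 with hδdef
  have hδ : 0 < δ := by positivity
  have hIcc : Set.Icc (εp - δ) (εp + δ) ⊆ {y | 0 < deriv σ y} := by
    intro y hy
    apply hball
    rw [Metric.mem_ball, Real.dist_eq, abs_lt]
    constructor
    · linarith [hy.1]
    · linarith [hy.2]
  -- σ is strictly monotone on [εp - δ, εp + δ]
  have hmono : StrictMonoOn σ (Set.Icc (εp - δ) (εp + δ)) := by
    apply strictMonoOn_of_deriv_pos (convex_Icc _ _) hσc.continuousOn
    intro y hy
    exact hIcc (interior_subset hy)
  have hεpmem : εp ∈ Set.Icc (εp - δ) (εp + δ) := by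
    constructor <;> linarith
  -- the potential W
  set W : ℝ → ℝ := fun y => ∫ t in εp..y, σ t with hWdef
  have hWεp : W εp = 0 := by simp [hWdef]
  have hWderiv : ∀ y, HasDerivAt W (σ y) y := fun y =>
    (hσc.integral_hasStrictDerivAt εp y).hasDerivAt
  have hWcont : Continuous W := by
    rw [continuous_iff_continuousAt]
    exact fun y => (hWderiv y).continuousAt
  -- W is positive on the punctured δ-interval
  have hWpos : ∀ y, y ≠ εp → |y - εp| ≤ δ → 0 < W y := by
    intro y hne habs
    rw [abs_le] at habs
    rcases lt_or_gt_of_ne hne with hlt | hgt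
    · -- y < εp : σ < 0 on (y, εp)
      have hneg : ∀ t ∈ Set.Ioo y εp, 0 < -σ t := by
        intro t ht
        have ht1 : t ∈ Set.Icc (εp - δ) (εp + δ) := by
          constructor
          · linarith [ht.1, habs.1]
          · linarith [ht.2]
        have := hmono ht1 hεpmem ht.2
        rw [hσεp] at this
        linarith
      have hpos : 0 < ∫ t in y..εp, -σ t :=
        intervalIntegral.intervalIntegral_pos_of_pos_on
          (hσc.neg.intervalIntegrable y εp) hneg hlt
      have heq : (∫ t in y..εp, -σ t) = W y := by
        rw [intervalIntegral.integral_neg, hWdef]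
        simp [intervalIntegral.integral_symm y εp]
      linarith [heq ▸ hpos]
    · -- εp < y : σ > 0 on (εp, y)
      have hposσ : ∀ t ∈ Set.Ioo εp y, 0 < σ t := by
        intro t ht
        have ht1 : t ∈ Set.Icc (εp - δ) (εp + δ) := by
          constructor
          · linarith [ht.1]
          · linarith [ht.2, habs.2]
        have := hmono hεpmem ht1 ht.1
        rw [hσεp] at this
        linarith
      exact intervalIntegral.intervalIntegral_pos_of_pos_on
        (hσc.intervalIntegrable εp y) hposσ hgt
  -- differentiability of p
  have hp2 : ContDiff ℝ (1 + 1) p := by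
    rw [show ((1 : WithTop ℕ∞) + 1) = 2 by norm_num]
    exact hp
  have hdp : Differentiable ℝ p := (contDiff_succ_iff_deriv.mp hp2).1
  have hdp' : Differentiable ℝ (deriv p) :=
    (contDiff_succ_iff_deriv.mp hp2).2.2.differentiable one_ne_zero
  -- the energy
  set E : ℝ → ℝ := fun x => β * c^2 / 2 * (deriv p x)^2 + W (p x) with hEdef
  have hE0 : ∀ x, HasDerivAt E 0 x := by
    intro x
    have h1 : HasDerivAt (deriv p) (deriv (deriv p) x) x := (hdp' x).hasDerivAt
    have h2 : HasDerivAt p (deriv p x) x := (hdp x).hasDerivAt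
    have hE : HasDerivAt E
        (β * c^2 / 2 * ((2 : ℕ) * (deriv p x) ^ 1 * deriv (deriv p) x)
          + σ (p x) * deriv p x) x :=
      ((h1.pow 2).const_mul (β * c^2 / 2)).add ((hWderiv (p x)).comp x h2)
    convert hE using 1
    have h := hode x
    push_cast
    linear_combination (-deriv p x) * h
  have hEdiff : Differentiable ℝ E := fun x => (hE0 x).differentiableAt
  have hEconst : ∀ x y, E x = E y :=
    is_const_of_deriv_eq_zero hEdiff (fun x => (hE0 x).deriv)
  -- E tends to 0 at +∞
  have hElim : Tendsto E atTop (nhds (β * c^2 / 2 * (0:ℝ)^2 + W εp)) := by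
    apply Tendsto.add
    · exact (hlimTop'.pow 2).const_mul _
    · exact (hWcont.tendsto εp).comp hlimTop
  have hElim0 : Tendsto E atTop (nhds 0) := by
    have : β * c^2 / 2 * (0:ℝ)^2 + W εp = 0 := by rw [hWεp]; ring
    rwa [this] at hElim
  have hEzero : ∀ x, E x = 0 := by
    intro x
    have hconst : Tendsto E atTop (nhds (E x)) := by
      have : E = fun _ => E x := funext fun y => hEconst y x
      rw [this]
      exact tendsto_const_nhds
    exact tendsto_nhds_unique hconst hElim0
  -- W (p x) ≤ 0 for all x
  have hWle : ∀ x, W (p x) ≤ 0 := by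
    intro x
    have hx := hEzero x
    simp only [hEdef] at hx
    nlinarith [mul_nonneg (by positivity : (0:ℝ) ≤ β * c^2 / 2) (sq_nonneg (deriv p x))]
  -- hence p never takes values in the punctured δ-neighborhood
  have hgap : ∀ x, p x = εp ∨ δ < |p x - εp| := by
    intro x
    by_cases h : p x = εp
    · exact Or.inl h
    · right
      by_contra hle
      push_neg at hle
      exact absurd (hWle x) (not_le.mpr (hWpos (p x) h hle))
  -- p is eventually equal to εp at +∞, so it takes the value εp somewhere
  have hx1 : ∃ x1, p x1 = εp := by
    have hev : ∀ᶠ x in atTop, |p x - εp| < δ := by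
      have := Metric.tendsto_nhds.mp hlimTop δ hδ
      simpa [Real.dist_eq] using this
    obtain ⟨x1, hx1⟩ := hev.exists
    rcases hgap x1 with h | h
    · exact ⟨x1, h⟩
    · linarith
  obtain ⟨x1, hx1⟩ := hx1
  -- conclude by the intermediate value theorem
  intro x
  rcases hgap x with h | h
  · exact h
  exfalso
  have hne0 : p x - εp ≠ 0 := by
    intro hh
    rw [hh] at h
    simp at h
    linarith
  rcases hne0.lt_or_gt with hlt | hgt
  · -- p x < εp - δ : the value εp - δ is attained
    have hlt' : p x < εp - δ := by
      rw [abs_of_neg hlt] at h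
      linarith
    have hmem : εp - δ ∈ Set.uIcc (p x) (p x1) := by
      rw [Set.mem_uIcc]
      left
      exact ⟨by linarith, by rw [hx1]; linarith⟩
    obtain ⟨z, _, hz⟩ := intermediate_value_uIcc (hp.continuous.continuousOn) hmem
    have hWz : 0 < W (p z) := by
      apply hWpos
      · rw [hz]; intro hh; linarith [hδ]
      · rw [hz, show εp - δ - εp = -δ by ring, abs_neg, abs_of_nonneg hδ.le]
    linarith [hWle z]
  · -- p x > εp + δ
    have hgt' : εp + δ < p x := by
      rw [abs_of_pos hgt] at h
      linarith
    have hmem : εp + δ ∈ Set.uIcc (p x) (p x1) := by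
      rw [Set.mem_uIcc]
      right
      exact ⟨by rw [hx1]; linarith, by linarith⟩
    obtain ⟨z, _, hz⟩ := intermediate_value_uIcc (hp.continuous.continuousOn) hmem
    have hWz : 0 < W (p z) := by
      apply hWpos
      · rw [hz]; intro hh; linarith [hδ]
      · rw [hz, show εp + δ - εp = δ by ring, abs_of_nonneg hδ.le]
    linarith [hWle z]
end
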